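/- arXiv:1606.09382 — 9 statements merged into one kernel-verified Lean document; each statement's English description precedes it below -/
import Mathlib

section
/- Let a > 0 and let f : ℝ → ℝ be (n+1) times continuously differentiable on the interval [0, a] (with sup_{x∈[0,a]} |f^{(n+1)}(x)| < ∞). Then for every n = 0, 1, 2, …, the limit as ε → 0⁺ of [ ∫_ε^a f(x)/x^{n+1} dx − Σ_{k=0}^{n−1} (f^{(k)}(0)/(k! (n−k))) ε^{−(n−k)} + (f^{(n)}(0)/n!) · ln ε ] exists and is finite; that is, the Hadamard finite part of the divergent integral ∫_0^a f(x)/x^{n+1} dx is well defined. -/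
/-!
Subtract from `f` its Taylor polynomial of degree `n` at `0`. By the Lagrange bound the
remainder divided by `x ^ (n + 1)` is bounded on `(0, a]`, hence integrable, so its integral
over `[ε, a]` converges as `ε → 0⁺`. What is left of `f x / x ^ (n + 1)` is the principal part
`∑_{k ≤ n} c_k x ^ (k - n - 1)` with `c_k = f^{(k)}(0) / k!`, which integrates explicitly over
`[ε, a]`; its `ε`-dependent part is exactly the counterterm the finite part subtracts.
-/

open MeasureTheory Filter Set Topology

noncomputable section

def taylorRemainderQuot (f : ℝ → ℝ) (n : ℕ) (s : Set ℝ) (x : ℝ) : ℝ :=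
  (f x - taylorWithinEval f n s 0 x) / x ^ (n + 1)

/-- Minus an antiderivative of the principal part `∑_{k ≤ n} c k * x ^ (k - n - 1)` on `(0, ∞)`. -/
def hadamardCounterterm (n : ℕ) (c : ℕ → ℝ) (ε : ℝ) : ℝ :=
  ∑ k ∈ Finset.range n, c k / (((n : ℝ) - k) * ε ^ (n - k)) - c n * Real.log ε

end

theorem tendsto_intervalIntegral_nhdsGT {g : ℝ → ℝ} {a b : ℝ} (hab : a < b)
    (hg : IntegrableOn g (Icc a b)) :
    Tendsto (fun ε => ∫ x in ε..b, g x) (𝓝[>] a) (𝓝 (∫ x in a..b, g x)) := by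
  rw [← uIcc_of_le hab.le] at hg
  have hcont := intervalIntegral.continuousOn_primitive_interval_left hg a left_mem_uIcc
  rw [uIcc_of_le hab.le] at hcont
  exact hcont.tendsto.mono_left (nhdsWithin_le_of_mem (Icc_mem_nhdsGT hab))

theorem div_pow_succ_eq_taylorRemainderQuot_add (f : ℝ → ℝ) (n : ℕ) (s : Set ℝ) {x : ℝ}
    (hx : x ≠ 0) :
    f x / x ^ (n + 1) = taylorRemainderQuot f n s x +
      ∑ k ∈ Finset.range (n + 1), taylorCoeffWithin f k s 0 * x ^ ((k : ℤ) - (n + 1)) := by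
  have hzpow : ∀ k : ℕ, x ^ ((k : ℤ) - (n + 1)) = x ^ k / x ^ (n + 1) := fun k => by
    rw [zpow_sub₀ hx, zpow_natCast]; norm_cast
  simp only [taylorRemainderQuot, taylor_within_apply, taylorCoeffWithin, hzpow, sub_zero,
    smul_eq_mul, sub_div, Finset.sum_div, mul_div_assoc']
  ring_nf

theorem integral_zpow_sub_succ_of_lt {k n : ℕ} (hk : k < n) {ε a : ℝ} (hε : 0 < ε)
    (ha : 0 < a) :
    ∫ x in ε..a, x ^ ((k : ℤ) - (n + 1)) =
      1 / (((n : ℝ) - k) * ε ^ (n - k)) - 1 / (((n : ℝ) - k) * a ^ (n - k)) := by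
  have h0 : (0 : ℝ) ∉ uIcc ε a := notMem_uIcc_of_lt hε ha
  have hexp : (k : ℤ) - (n + 1) + 1 = -((n - k : ℕ) : ℤ) := by omega
  have hnk : ((n : ℝ) - k) ≠ 0 := sub_ne_zero.2 (by exact_mod_cast hk.ne')
  have hden : (((k : ℤ) - (n + 1) : ℤ) : ℝ) + 1 = -((n : ℝ) - k) := by push_cast; ring
  rw [integral_zpow (Or.inr ⟨by omega, h0⟩), hexp, hden, zpow_neg, zpow_neg, zpow_natCast,
    zpow_natCast]
  field_simp
  ring

theorem integral_principalPart (n : ℕ) (c : ℕ → ℝ) {ε a : ℝ} (hε : 0 < ε) (ha : 0 < a) :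
    ∫ x in ε..a, ∑ k ∈ Finset.range (n + 1), c k * x ^ ((k : ℤ) - (n + 1)) =
      hadamardCounterterm n c ε - hadamardCounterterm n c a := by
  have h0 : (0 : ℝ) ∉ uIcc ε a := notMem_uIcc_of_lt hε ha
  rw [intervalIntegral.integral_finsetSum fun k _ =>
    (intervalIntegral.intervalIntegrable_zpow (Or.inr h0)).const_mul _]
  simp only [intervalIntegral.integral_const_mul]
  have hlog : ∫ x in ε..a, x ^ ((n : ℤ) - (n + 1)) = Real.log a - Real.log ε := by
    rw [show (n : ℤ) - (n + 1) = -1 by ring]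
    simp only [zpow_neg_one]
    rw [integral_inv_of_pos hε ha, Real.log_div ha.ne' hε.ne']
  rw [Finset.sum_range_succ, hlog, Finset.sum_congr rfl fun k hk =>
    by rw [integral_zpow_sub_succ_of_lt (Finset.mem_range.1 hk) hε ha]]
  simp only [hadamardCounterterm, mul_sub, Finset.sum_sub_distrib, mul_one_div]
  ring

theorem continuousOn_taylorRemainderQuot {f : ℝ → ℝ} {t : Set ℝ} (hf : ContinuousOn f t)
    (ht : (0 : ℝ) ∉ t) (n : ℕ) (s : Set ℝ) : ContinuousOn (taylorRemainderQuot f n s) t := by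
  have hT : Continuous (taylorWithinEval f n s 0) := by
    simp only [funext (taylor_within_apply f n s 0)]
    fun_prop
  exact (hf.sub hT.continuousOn).div (continuousOn_pow _) fun x hx =>
    pow_ne_zero _ (ne_of_mem_of_not_mem hx ht)

theorem abs_taylorRemainderQuot_le {f : ℝ → ℝ} {a M : ℝ} {n : ℕ} (ha : 0 ≤ a)
    (hf : ContDiffOn ℝ (n + 1) f (Icc 0 a))
    (hM : ∀ x ∈ Icc 0 a, |iteratedDerivWithin (n + 1) f (Icc 0 a) x| ≤ M) {x : ℝ}
    (hx : x ∈ Ioc 0 a) : |taylorRemainderQuot f n (Icc 0 a) x| ≤ M / n.factorial := by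
  have hxn : 0 < x ^ (n + 1) := pow_pos hx.1 _
  have hbound := taylor_mean_remainder_bound ha hf (Ioc_subset_Icc_self hx) hM
  rw [Real.norm_eq_abs, sub_zero] at hbound
  rw [taylorRemainderQuot, abs_div, abs_of_pos hxn, div_le_iff₀ hxn]
  exact hbound.trans_eq (by ring)

theorem integrableOn_taylorRemainderQuot {f : ℝ → ℝ} {a M : ℝ} {n : ℕ} (ha : 0 ≤ a)
    (hf : ContDiffOn ℝ (n + 1) f (Icc 0 a))
    (hM : ∀ x ∈ Icc 0 a, |iteratedDerivWithin (n + 1) f (Icc 0 a) x| ≤ M) :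
    IntegrableOn (taylorRemainderQuot f n (Icc 0 a)) (Icc 0 a) := by
  rw [integrableOn_Icc_iff_integrableOn_Ioc]
  refine .of_bound measure_Ioc_lt_top ?_ (M / n.factorial) ?_
  · exact (continuousOn_taylorRemainderQuot (hf.continuousOn.mono Ioc_subset_Icc_self)
      left_notMem_Ioc n _).aestronglyMeasurable measurableSet_Ioc
  · exact (ae_restrict_iff' measurableSet_Ioc).2 <| ae_of_all _ fun x hx =>
      abs_taylorRemainderQuot_le ha hf hM hx

theorem integral_div_pow_sub_hadamardCounterterm {f : ℝ → ℝ} {n : ℕ} {s : Set ℝ} {ε a : ℝ}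
    (hε : 0 < ε) (ha : 0 < a)
    (hR : IntervalIntegrable (taylorRemainderQuot f n s) volume ε a) :
    (∫ x in ε..a, f x / x ^ (n + 1)) - hadamardCounterterm n (taylorCoeffWithin f · s 0) ε =
      (∫ x in ε..a, taylorRemainderQuot f n s x) -
        hadamardCounterterm n (taylorCoeffWithin f · s 0) a := by
  have h0 : (0 : ℝ) ∉ uIcc ε a := notMem_uIcc_of_lt hε ha
  have hP : IntervalIntegrable
      (fun x => ∑ k ∈ Finset.range (n + 1), taylorCoeffWithin f k s 0 * x ^ ((k : ℤ) - (n + 1)))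
      volume ε a :=
    (continuousOn_finsetSum _ fun k _ => continuousOn_const.mul <|
      continuousOn_id.zpow₀ _ fun x hx => .inl (ne_of_mem_of_not_mem hx h0)).intervalIntegrable
  rw [intervalIntegral.integral_congr fun x hx =>
      div_pow_succ_eq_taylorRemainderQuot_add f n s (ne_of_mem_of_not_mem hx h0),
    intervalIntegral.integral_add hR hP, integral_principalPart n _ hε ha]
  ring

theorem hadamardCounterterm_taylorCoeffWithin (f : ℝ → ℝ) (n : ℕ) (s : Set ℝ) (ε : ℝ) :
    hadamardCounterterm n (taylorCoeffWithin f · s 0) ε =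
      ∑ k ∈ Finset.range n, iteratedDerivWithin k f s 0 /
        ((k.factorial : ℝ) * ((n : ℝ) - k) * ε ^ (n - k)) -
      iteratedDerivWithin n f s 0 / (n.factorial : ℝ) * Real.log ε := by
  simp only [hadamardCounterterm, taylorCoeffWithin, smul_eq_mul]
  congr 1
  · exact Finset.sum_congr rfl fun k _ => by rw [inv_mul_eq_div, div_div, mul_assoc]
  · ring

/-- For `a > 0` and `f` that is `(n+1)` times continuously differentiable on
`[0, a]` with bounded `(n+1)`-th derivative, the Hadamard finite part of the divergent
integral `∫_0^a f(x)/x^{n+1} dx` is well defined, i.e. the limit as `ε → 0⁺` of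
`∫_ε^a f(x)/x^{n+1} dx − Σ_{k<n} f^{(k)}(0)/(k!(n−k)) ε^{k−n} + (f^{(n)}(0)/n!) ln ε`
exists and is finite. -/
theorem finite_part_pole_exists (a : ℝ) (ha : 0 < a) (n : ℕ) (f : ℝ → ℝ)
    (hf : ContDiffOn ℝ (n + 1) f (Icc 0 a))
    (M : ℝ)
    (hM : ∀ x ∈ Icc 0 a, |iteratedDerivWithin (n + 1) f (Icc 0 a) x| ≤ M) :
    ∃ L : ℝ, Tendsto (fun ε : ℝ =>
        (∫ x in ε..a, f x / x ^ (n + 1))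
        - (∑ k ∈ Finset.range n,
            iteratedDerivWithin k f (Icc 0 a) 0 /
              ((k.factorial : ℝ) * ((n : ℝ) - k) * ε ^ (n - k)))
        + iteratedDerivWithin n f (Icc 0 a) 0 / (n.factorial : ℝ) * Real.log ε)
      (nhdsWithin 0 (Ioi 0)) (nhds L) := by
  have hR := integrableOn_taylorRemainderQuot ha.le hf hM
  refine ⟨_, ((tendsto_intervalIntegral_nhdsGT ha hR).sub_const
    (hadamardCounterterm n (taylorCoeffWithin f · (Icc 0 a) 0) a)).congr' ?_⟩
  filter_upwards [self_mem_nhdsWithin, Icc_mem_nhdsGT ha] with ε (hε : 0 < ε) hεa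
  have hRε : IntervalIntegrable (taylorRemainderQuot f n (Icc 0 a)) volume ε a :=
    (hR.mono_set (by rw [uIcc_of_le hεa.2]; exact Icc_subset_Icc hε.le le_rfl)).intervalIntegrable
  rw [← integral_div_pow_sub_hadamardCounterterm hε ha hRε,
    hadamardCounterterm_taylorCoeffWithin]
  ring
end

section
/- Let a > 0 and let f : ℂ → ℂ be analytic on an open set containing the closed disk {z : |z| ≤ a}. Then for every n = 0, 1, 2, …, the finite part integral satisfies ⨍_0^a f(x)/x^{n+1} dx = (1/(2πi)) ∫_0^{2π} f(a e^{iθ}) (ln a + iθ − iπ) (a e^{iθ})^{−(n+1)} · i a e^{iθ} dθ, i.e. the finite part equals the contour integral (1/(2πi)) ∫_C f(z) (log z − iπ) z^{−(n+1)} dz taken over the circle of radius a about the origin traversed counterclockwise from a back to a, with the branch of log z whose cut is the positive real axis (so log(a e^{iθ}) = ln a + iθ for 0 < θ < 2π). -/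
/-!
Expand `f` in its Taylor series `∑ cₖ zᵏ`, which converges absolutely on the closed disk of
radius `a`, and integrate termwise on both sides. With `Φₘ` the primitive of `t ^ (m - 1)`
(`log t` for `m = 0`), the `k`-th term of `∫_ε^a f(x)/x^{n+1} dx` is `cₖ (Φₖ₋ₙ(a) - Φₖ₋ₙ(ε))`, while
the `k`-th term of the contour integral is `cₖ Φₖ₋ₙ(a)`: the primitive of `z^{m-1}(log z - iπ)`
jumps by `2πi Φₘ(a)` across the cut. The counterterms of the finite part cancel `cₖ Φₖ₋ₙ(ε)` for
`k ≤ n` exactly, and the remainder `∑_{k>n} cₖ εᵏ⁻ⁿ/(k-n)` tends to `0` by dominated convergence.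
-/

open MeasureTheory Filter Set Complex Metric Topology
open scoped Real

theorem summable_norm_mul_pow_of_summable_mul_pow {𝕜 : Type*} [NormedField 𝕜] {c : ℕ → 𝕜}
    {z : 𝕜} {r : ℝ} (hz : Summable fun k => c k * z ^ k) (hr : 0 ≤ r) (hrz : r < ‖z‖) :
    Summable fun k => ‖c k‖ * r ^ k := by
  obtain ⟨M, hM⟩ := hz.tendsto_atTop_zero.norm.bddAbove_range
  have hz0 : 0 < ‖z‖ := hr.trans_lt hrz
  refine .of_nonneg_of_le (fun k => by positivity) (fun k => ?_)
    ((summable_geometric_of_lt_one (by positivity) ((div_lt_one hz0).2 hrz)).mul_left M)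
  calc ‖c k‖ * r ^ k = ‖c k * z ^ k‖ * (r / ‖z‖) ^ k := by
        rw [norm_mul, norm_pow, div_pow]; field_simp
    _ ≤ M * (r / ‖z‖) ^ k := by gcongr; exact hM (mem_range_self k)

noncomputable def taylorCoeff (f : ℂ → ℂ) (k : ℕ) : ℂ := iteratedDeriv k f 0 / k.factorial

theorem AnalyticOnNhd.hasSum_taylorCoeff_mul_pow_and_summable {f : ℂ → ℂ} {U : Set ℂ} {a : ℝ}
    (ha : 0 ≤ a) (hU : IsOpen U) (hUa : closedBall 0 a ⊆ U) (hf : AnalyticOnNhd ℂ f U) :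
    (∀ z : ℂ, ‖z‖ ≤ a → HasSum (fun k => taylorCoeff f k * z ^ k) (f z)) ∧
      Summable fun k => ‖taylorCoeff f k‖ * a ^ k := by
  obtain ⟨δ, hδ, hthick⟩ := (isCompact_closedBall (0 : ℂ) a).exists_thickening_subset_open hU hUa
  rw [thickening_closedBall hδ ha] at hthick
  have hsum : ∀ z : ℂ, ‖z‖ < δ + a → HasSum (fun k => taylorCoeff f k * z ^ k) (f z) := by
    intro z hz
    simpa only [taylorCoeff, sub_zero, smul_eq_mul, div_eq_inv_mul, mul_right_comm, mul_assoc] using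
      hasSum_taylorSeries_on_ball (fun w hw => (hf w (hthick hw)).differentiableWithinAt)
        (mem_ball_zero_iff.2 hz)
  refine ⟨fun z hz => hsum z (by linarith), ?_⟩
  have hb : ‖((a + δ / 2 : ℝ) : ℂ)‖ = a + δ / 2 := by
    rw [norm_real, Real.norm_of_nonneg (by positivity)]
  exact summable_norm_mul_pow_of_summable_mul_pow (hsum _ (by rw [hb]; linarith)).summable ha
    (by rw [hb]; linarith)

theorem hasSum_intervalIntegral_comp_mul {c : ℕ → ℂ} {g : ℂ → ℂ} {r : ℝ}
    (hg : ∀ z : ℂ, ‖z‖ ≤ r → HasSum (fun k => c k * z ^ k) (g z))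
    (hc : Summable fun k => ‖c k‖ * r ^ k) {γ w : ℝ → ℂ} {α β : ℝ}
    (hγ : ContinuousOn γ (uIcc α β)) (hw : ContinuousOn w (uIcc α β))
    (hγr : ∀ t ∈ uIcc α β, ‖γ t‖ ≤ r) :
    HasSum (fun k => c k * ∫ t in α..β, γ t ^ k * w t) (∫ t in α..β, g (γ t) * w t) := by
  obtain ⟨C, hC⟩ := isCompact_uIcc.exists_bound_of_continuousOn hw
  simp_rw [← intervalIntegral.integral_const_mul]
  refine intervalIntegral.hasSum_integral_of_dominated_convergence (fun k _ => ‖c k‖ * r ^ k * C)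
    (fun k => ?_) (fun k => .of_forall fun t ht => ?_) (.of_forall fun _ _ => hc.mul_right C)
    intervalIntegrable_const (.of_forall fun t ht => ?_)
  · exact ((continuousOn_const.mul ((hγ.pow k).mul hw)).mono
      uIoc_subset_uIcc).aestronglyMeasurable measurableSet_uIoc
  · have ht' := uIoc_subset_uIcc ht
    rw [norm_mul, norm_mul, norm_pow, mul_assoc]
    have hγt := hγr t ht'
    gcongr
    · exact pow_nonneg ((norm_nonneg _).trans hγt) k
    · exact hC t ht'
  · simpa only [mul_assoc] using (hg _ (hγr t (uIoc_subset_uIcc ht))).mul_right (w t)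

/-- A primitive of `t ↦ t ^ (m - 1)` on each half-line; for `m = 0` it is `Real.log t = log |t|`. -/
noncomputable def zpowPrimitive (m : ℤ) (t : ℝ) : ℂ := if m = 0 then Real.log t else (t : ℂ) ^ m / m

theorem zpowPrimitive_natCast_add_one (j : ℕ) (t : ℝ) :
    zpowPrimitive (j + 1) t = (t : ℂ) ^ (j + 1) / (j + 1) := by
  rw [zpowPrimitive, if_neg (by omega)]
  norm_cast

theorem sum_range_succ_mul_zpowPrimitive (c : ℕ → ℂ) (n : ℕ) (ε : ℝ) :
    ∑ k ∈ Finset.range (n + 1), c k * zpowPrimitive (k - n) ε =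
      c n * Real.log ε - ∑ k ∈ Finset.range n, c k / ((n - k) * (ε : ℂ) ^ (n - k)) := by
  rw [Finset.sum_range_succ, sub_self, zpowPrimitive, if_pos rfl, add_comm, sub_eq_add_neg,
    ← Finset.sum_neg_distrib]
  congr 1
  refine Finset.sum_congr rfl fun k hk => ?_
  have hkn := Finset.mem_range.1 hk
  rw [zpowPrimitive, if_neg (by omega), show (k : ℤ) - n = -((n - k : ℕ) : ℤ) by omega, zpow_neg,
    zpow_natCast, Nat.cast_sub hkn.le]
  push_cast
  simp only [div_eq_mul_inv, mul_inv, inv_neg]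
  ring

theorem integral_ofReal_zpow_sub_one (m : ℤ) {α β : ℝ} (h : (0 : ℝ) ∉ uIcc α β) :
    ∫ x in α..β, (x : ℂ) ^ (m - 1) = zpowPrimitive m β - zpowPrimitive m α := by
  simp_rw [← ofReal_zpow, intervalIntegral.integral_ofReal, zpowPrimitive]
  split_ifs with hm
  · have hα : α ≠ 0 := fun h' => h (h' ▸ left_mem_uIcc)
    have hβ : β ≠ 0 := fun h' => h (h' ▸ right_mem_uIcc)
    simp [hm, integral_inv h, Real.log_div hβ hα]
  · rw [integral_zpow (.inr ⟨by omega, h⟩)]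
    push_cast
    simp [sub_div]

theorem integral_exp_int_mul_I_mul_affine (m : ℤ) (hm : m ≠ 0) (c : ℂ) :
    ∫ θ in (0 : ℝ)..2 * π, exp (m * θ * I) * (c + θ * I) = 2 * π / m := by
  let F : ℝ → ℂ := fun θ => exp (m * θ * I) * ((c + θ * I) / (m * I) + I / m ^ 2)
  have hF : ∀ θ : ℝ, HasDerivAt F (exp (m * θ * I) * (c + θ * I)) θ := by
    intro θ
    have hθ : HasDerivAt (fun θ : ℝ => (θ : ℂ)) 1 θ := hasDerivAt_id θ |>.ofReal_comp
    have hexp := ((hθ.const_mul (m : ℂ)).mul_const I).cexp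
    have hlin :=
      (((hθ.mul_const I).const_add c).div_const ((m : ℂ) * I)).add_const (I / (m : ℂ) ^ 2)
    refine (hexp.mul hlin).congr_deriv ?_
    field_simp
    ring_nf
    simp only [I_sq]
    ring
  rw [intervalIntegral.integral_eq_sub_of_hasDerivAt (fun θ _ => hF θ)
    (by apply Continuous.intervalIntegrable; fun_prop)]
  have h2π : exp (m * (2 * π : ℝ) * I) = 1 := by
    rw [← exp_int_mul_two_pi_mul_I m]; push_cast; ring_nf
  simp only [F, h2π, ofReal_zero, mul_zero, zero_mul, exp_zero]
  field_simp
  push_cast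
  ring

theorem integral_circle_zpow_mul_log (a : ℝ) (m : ℤ) :
    ∫ θ in (0 : ℝ)..2 * π,
        ((a : ℂ) * exp (θ * I)) ^ m * ((Real.log a : ℂ) + θ * I - π * I) * I =
      2 * π * I * zpowPrimitive m a := by
  have hexp : ∀ θ : ℝ, ((a : ℂ) * exp (θ * I)) ^ m * ((Real.log a : ℂ) + θ * I - π * I) * I =
      (a : ℂ) ^ m * I * (exp (m * θ * I) * ((Real.log a - π * I) + θ * I)) := by
    intro θ
    rw [mul_zpow, ← exp_int_mul]
    ring_nf
  simp_rw [hexp, intervalIntegral.integral_const_mul, zpowPrimitive]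
  split_ifs with hm
  · simp only [hm, Int.cast_zero, zpow_zero, zero_mul, exp_zero, one_mul, one_mul]
    rw [intervalIntegral.integral_add intervalIntegrable_const
      (by apply Continuous.intervalIntegrable; fun_prop),
      intervalIntegral.integral_mul_const, intervalIntegral.integral_ofReal]
    simp only [intervalIntegral.integral_const, integral_id, sub_zero, real_smul, ofReal_mul,
      ofReal_ofNat, ofReal_div, ofReal_pow, ne_eq, OfNat.ofNat_ne_zero, not_false_eq_true, zero_pow]
    ring
  · rw [integral_exp_int_mul_I_mul_affine m hm]
    field_simp

section PowerSeries

variable {f : ℂ → ℂ} {c : ℕ → ℂ} {a : ℝ}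
  (hf : ∀ z : ℂ, ‖z‖ ≤ a → HasSum (fun k => c k * z ^ k) (f z))
  (hc : Summable fun k => ‖c k‖ * a ^ k)
include hf hc

theorem hasSum_integral_div_pow_succ {ε : ℝ} (hε : 0 < ε) (hεa : ε ≤ a) (n : ℕ) :
    HasSum (fun k => c k * (zpowPrimitive (k - n) a - zpowPrimitive (k - n) ε))
      (∫ x in ε..a, f x / (x : ℂ) ^ (n + 1)) := by
  have h0 : (0 : ℝ) ∉ uIcc ε a := by rw [uIcc_of_le hεa]; exact fun h => hε.not_ge h.1
  have hpos : ∀ x ∈ uIcc ε a, 0 < x := by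
    rw [uIcc_of_le hεa]; exact fun x hx => hε.trans_le hx.1
  have hsum := hasSum_intervalIntegral_comp_mul hf hc continuous_ofReal.continuousOn
    (w := fun x : ℝ => ((x : ℂ) ^ (n + 1))⁻¹)
    ((continuous_ofReal.pow (n + 1)).continuousOn.inv₀
      fun x hx => pow_ne_zero _ (ofReal_ne_zero.2 (hpos x hx).ne'))
    (fun x hx => by
      rw [norm_real, Real.norm_of_nonneg (hpos x hx).le]; exact (uIcc_of_le hεa ▸ hx).2)
  simp_rw [div_eq_mul_inv]
  refine hsum.congr_fun fun k => ?_
  rw [← integral_ofReal_zpow_sub_one _ h0]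
  congr 1
  refine intervalIntegral.integral_congr fun x hx => ?_
  have hx0 := ofReal_ne_zero.2 (hpos x hx).ne'
  rw [← zpow_natCast, ← zpow_natCast, ← zpow_neg, ← zpow_add₀ hx0]
  congr 1
  push_cast
  ring

theorem hasSum_circle_integral_mul_log (ha : 0 < a) (n : ℕ) :
    HasSum (fun k => c k * zpowPrimitive (k - n) a)
      ((1 / (2 * π * I)) * ∫ θ in (0 : ℝ)..2 * π,
        f (a * exp (θ * I)) * ((Real.log a : ℂ) + θ * I - π * I) *
          ((a : ℂ) * exp (θ * I))⁻¹ ^ (n + 1) * (I * a * exp (θ * I))) := by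
  have hX : ∀ θ : ℝ, (a : ℂ) * exp (θ * I) ≠ 0 := fun θ =>
    mul_ne_zero (ofReal_ne_zero.2 ha.ne') (exp_ne_zero _)
  have hsum := hasSum_intervalIntegral_comp_mul hf hc (α := 0) (β := 2 * π)
    (γ := fun θ : ℝ => (a : ℂ) * exp (θ * I))
    (w := fun θ : ℝ => ((Real.log a : ℂ) + θ * I - π * I) * ((a : ℂ) * exp (θ * I))⁻¹ ^ (n + 1) *
      (I * a * exp (θ * I)))
    (by fun_prop) (by fun_prop (disch := exact hX _))
    (fun θ _ => by
      rw [norm_mul, norm_exp_ofReal_mul_I, norm_real, Real.norm_of_nonneg ha.le, mul_one])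
  have hval : (∫ θ in (0 : ℝ)..2 * π, f (a * exp (θ * I)) * ((Real.log a : ℂ) + θ * I - π * I) *
        ((a : ℂ) * exp (θ * I))⁻¹ ^ (n + 1) * (I * a * exp (θ * I))) =
      ∫ θ in (0 : ℝ)..2 * π, f (a * exp (θ * I)) * (((Real.log a : ℂ) + θ * I - π * I) *
        ((a : ℂ) * exp (θ * I))⁻¹ ^ (n + 1) * (I * a * exp (θ * I))) :=
    intervalIntegral.integral_congr fun θ _ => by ring
  rw [hval]
  refine (hsum.mul_left _).congr_fun fun k => ?_
  have hterm : (∫ θ in (0 : ℝ)..2 * π, ((a : ℂ) * exp (θ * I)) ^ k *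
        (((Real.log a : ℂ) + θ * I - π * I) * ((a : ℂ) * exp (θ * I))⁻¹ ^ (n + 1) *
          (I * a * exp (θ * I)))) =
      ∫ θ in (0 : ℝ)..2 * π,
        ((a : ℂ) * exp (θ * I)) ^ ((k : ℤ) - n) * ((Real.log a : ℂ) + θ * I - π * I) * I := by
    refine intervalIntegral.integral_congr fun θ _ => ?_
    rw [mul_assoc I, zpow_sub₀ (hX θ), zpow_natCast, zpow_natCast]
    have hXθ := hX θ
    generalize (a : ℂ) * exp (θ * I) = X at hXθ ⊢
    rw [inv_pow, pow_succ]
    field_simp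
  rw [hterm, integral_circle_zpow_mul_log]
  field_simp

end PowerSeries

theorem tendsto_tsum_mul_zpowPrimitive_add_one {d : ℕ → ℂ} {a : ℝ} (ha : 0 < a)
    (hd : Summable fun j => ‖d j‖ * a ^ (j + 1)) :
    Tendsto (fun ε => ∑' j, d j * zpowPrimitive (j + 1) ε) (𝓝[>] 0) (𝓝 0) := by
  simp_rw [zpowPrimitive_natCast_add_one]
  have hterm : ∀ j : ℕ, Tendsto (fun ε : ℝ => d j * ((ε : ℂ) ^ (j + 1) / (j + 1))) (𝓝[>] 0) (𝓝 0) :=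
    fun j => tendsto_nhdsWithin_of_tendsto_nhds <| Continuous.tendsto' (by fun_prop) 0 0 (by simp)
  have hbound : ∀ᶠ ε : ℝ in 𝓝[>] 0, ∀ j : ℕ,
      ‖d j * ((ε : ℂ) ^ (j + 1) / (j + 1))‖ ≤ ‖d j‖ * a ^ (j + 1) := by
    filter_upwards [Ioc_mem_nhdsGT ha] with ε hε j
    have hj : ‖(j : ℂ) + 1‖ = j + 1 := by exact_mod_cast norm_natCast (j + 1)
    rw [norm_mul, norm_div, norm_pow, norm_real, Real.norm_of_nonneg hε.1.le, hj]
    exact mul_le_mul_of_nonneg_left ((div_le_self (pow_pos hε.1 _).le (by simp)).trans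
      (pow_le_pow_left₀ hε.1.le hε.2 _)) (norm_nonneg _)
  simpa using tendsto_tsum_of_dominated_convergence hd hterm hbound

theorem tendsto_finitePart_of_hasSum_zpowPrimitive {c : ℕ → ℂ} {a : ℝ} (ha : 0 < a)
    (hc : Summable fun k => ‖c k‖ * a ^ k) (n : ℕ) {F : ℝ → ℂ} {C : ℂ}
    (hF : ∀ ε ∈ Ioc 0 a, HasSum (fun k => c k * (zpowPrimitive (k - n) a - zpowPrimitive (k - n) ε))
      (F ε))
    (hC : HasSum (fun k => c k * zpowPrimitive (k - n) a) C) :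
    Tendsto (fun ε => F ε - ∑ k ∈ Finset.range n, c k / ((n - k) * (ε : ℂ) ^ (n - k)) +
      c n * Real.log ε) (𝓝[>] 0) (𝓝 C) := by
  have hc_tail : Summable fun j => ‖c (j + (n + 1))‖ * a ^ (j + 1) := by
    refine (((summable_nat_add_iff (n + 1)).2 hc).div_const (a ^ n)).congr fun j => ?_
    rw [show j + (n + 1) = j + 1 + n by ring, pow_add]
    field_simp
  have htail := (tendsto_tsum_mul_zpowPrimitive_add_one ha hc_tail).const_sub C
  rw [sub_zero] at htail
  refine htail.congr' ?_
  filter_upwards [Ioc_mem_nhdsGT ha] with ε hε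
  have hsum : HasSum (fun k => c k * zpowPrimitive (k - n) ε) (C - F ε) :=
    (hC.sub (hF ε hε)).congr_fun fun k => by ring
  rw [← hasSum_nat_add_iff' (n + 1)] at hsum
  have hshift : ∀ j : ℕ, ((j + (n + 1) : ℕ) : ℤ) - n = j + 1 := fun j => by push_cast; ring
  simp only [hshift] at hsum
  rw [hsum.tsum_eq, sum_range_succ_mul_zpowPrimitive]
  ring

/-- For `a > 0` and `f : ℂ → ℂ` analytic on an open set containing the closed
disk of radius `a`, the finite part integral `⨍_0^a f(x)/x^{n+1} dx` equals the contour
integral `(1/(2πi)) ∫_C f(z)(log z − iπ) z^{−(n+1)} dz` over the circle of radius `a`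
(parametrized by `z = a e^{iθ}`, `0 ≤ θ ≤ 2π`, with `log z = ln a + iθ`). -/
theorem finite_part_pole_contour (a : ℝ) (ha : 0 < a) (n : ℕ) (f : ℂ → ℂ)
    (U : Set ℂ) (hU : IsOpen U) (hUa : Metric.closedBall 0 a ⊆ U)
    (hf : AnalyticOnNhd ℂ f U) :
    Tendsto (fun ε : ℝ =>
        (∫ x in ε..a, f x / (x : ℂ) ^ (n + 1))
        - (∑ k ∈ Finset.range n,
            iteratedDeriv k f 0 /
              ((k.factorial : ℂ) * ((n : ℂ) - k) * (ε : ℂ) ^ (n - k)))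
        + iteratedDeriv n f 0 / (n.factorial : ℂ) * (Real.log ε : ℂ))
      (nhdsWithin 0 (Ioi 0))
      (nhds ((1 / (2 * Real.pi * Complex.I)) *
        ∫ θ in (0:ℝ)..(2 * Real.pi),
          f (a * Complex.exp (θ * Complex.I)) *
            ((Real.log a : ℂ) + θ * Complex.I - Real.pi * Complex.I) *
            ((a : ℂ) * Complex.exp (θ * Complex.I))⁻¹ ^ (n + 1) *
            (Complex.I * a * Complex.exp (θ * Complex.I)))) := by
  obtain ⟨hfc, hc⟩ := hf.hasSum_taylorCoeff_mul_pow_and_summable ha.le hU hUa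
  refine (tendsto_finitePart_of_hasSum_zpowPrimitive ha hc n
    (fun ε hε => hasSum_integral_div_pow_succ hfc hc hε.1 hε.2 n)
    (hasSum_circle_integral_mul_log hfc hc ha n)).congr fun ε => ?_
  simp only [taylorCoeff, div_div, mul_assoc]
end

section
/- Let a > 0, m ≥ 1 an integer, 0 < ν < 1, and let f : ℂ → ℂ be analytic on an open set containing the closed disk {z : |z| ≤ a}. Then the finite part integral satisfies ⨍_0^a f(x)/x^{m+ν} dx = (1/(e^{−2πiν} − 1)) ∫_0^{2π} f(a e^{iθ}) e^{−(m+ν)(ln a + iθ)} · i a e^{iθ} dθ, i.e. the finite part equals (1/(e^{−2πiν} − 1)) ∫_C f(z) z^{−(m+ν)} dz over the circle of radius a about the origin traversed counterclockwise from a back to a, where the branch of z^{−(m+ν)} is positive on top of the positive real axis (so z^{−(m+ν)} = e^{−(m+ν)(ln a + iθ)} at z = a e^{iθ}, 0 < θ < 2π). -/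
/-!
Write `s = m + ν` and expand `f = ∑ cₙ zⁿ` on the closed disc of radius `a`. Both integrals can
then be taken term by term. On `[ε, a]` the term `cₙ x^(n - s)` integrates to `cₙ (Pₙ a - Pₙ ε)`,
where `Pₙ t = t^(n - s + 1) / (n - s + 1)`. On the circle the chosen branch turns
`zⁿ z^(-s) dz` into `i a^(n - s + 1) e^(i (n - s + 1) θ) dθ`, whose integral is
`(e^(-2πis) - 1) Pₙ a` because `n + 1` is an integer; since `s` is not an integer this factor
is nonzero and independent of `n`. Of the series `∑ cₙ Pₙ ε`, the terms `n < m` are exactly the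
subtracted singular part, and the remaining terms have positive exponents, so their sum tends
to `0` as `ε → 0⁺`.
-/

open MeasureTheory Filter Set

open scoped Real Nat Topology NNReal ENNReal Interval

theorem AnalyticOnNhd.exists_hasSum_pow_of_closedBall_subset {f : ℂ → ℂ} {U : Set ℂ} {a : ℝ}
    (ha : 0 ≤ a) (hU : IsOpen U) (hUa : Metric.closedBall 0 a ⊆ U) (hf : AnalyticOnNhd ℂ f U) :
    ∃ c : ℕ → ℂ, Summable (fun n => ‖c n‖ * a ^ n) ∧
      (∀ z : ℂ, ‖z‖ ≤ a → HasSum (fun n => c n * z ^ n) (f z)) ∧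
      ∀ n, iteratedDeriv n f 0 = n ! * c n := by
  obtain ⟨δ, hδ, hδU⟩ := (isCompact_closedBall (0 : ℂ) a).exists_cthickening_subset_open hU hUa
  rw [cthickening_closedBall hδ.le ha] at hδU
  set R : ℝ≥0 := ⟨δ + a, by positivity⟩
  have hp := (hf.mono hδU).differentiableOn.hasFPowerSeriesOnBall (R := R)
    (add_pos_of_pos_of_nonneg hδ ha)
  have haR : (a.toNNReal : ℝ≥0∞) < R := by
    rw [ENNReal.coe_lt_coe, ← NNReal.coe_lt_coe, Real.coe_toNNReal _ ha]
    exact lt_add_of_pos_left a hδ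
  refine ⟨fun n => (cauchyPowerSeries f 0 R).coeff n, ?_, fun z hz => ?_, fun n => ?_⟩
  · simpa [FormalMultilinearSeries.norm_apply_eq_norm_coef, Real.coe_toNNReal _ ha] using
      (cauchyPowerSeries f 0 R).summable_norm_mul_pow (haR.trans_le hp.r_le)
  · have hz' : z ∈ Metric.eball (0 : ℂ) R := by
      rw [mem_eball_zero_iff]
      exact_mod_cast hz.trans_lt (lt_add_of_pos_left a hδ)
    simpa [FormalMultilinearSeries.apply_eq_pow_smul_coeff, mul_comm] using hp.hasSum hz'
  · rw [iteratedDeriv, ← hp.factorial_smul 1 n, nsmul_eq_mul]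
    rfl

theorem hasSum_intervalIntegral_of_norm_le_summable {E : Type*} [NormedAddCommGroup E]
    [NormedSpace ℝ E] [CompleteSpace E] {F : ℕ → ℝ → E} {f : ℝ → E} {u v : ℝ} {B : ℕ → ℝ}
    (hF : ∀ n, ContinuousOn (F n) (uIcc u v)) (hB : ∀ n, ∀ t ∈ Ι u v, ‖F n t‖ ≤ B n)
    (hBs : Summable B) (hf : ∀ t ∈ Ι u v, HasSum (fun n => F n t) (f t)) :
    HasSum (fun n => ∫ t in u..v, F n t) (∫ t in u..v, f t) :=
  intervalIntegral.hasSum_integral_of_dominated_convergence (fun n _ => B n)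
    (fun n => ((hF n).mono uIoc_subset_uIcc).aestronglyMeasurable measurableSet_uIoc)
    (fun n => ae_of_all _ (hB n)) (ae_of_all _ fun _ _ => hBs) intervalIntegrable_const
    (ae_of_all _ hf)

noncomputable def rpowPrimitive (r t : ℝ) : ℝ := t ^ (r + 1) / (r + 1)

theorem integral_rpow_eq_rpowPrimitive_sub {r ε a : ℝ} (hε : 0 < ε) (hεa : ε ≤ a) (hr : r ≠ -1) :
    ∫ x in ε..a, x ^ r = rpowPrimitive r a - rpowPrimitive r ε := by
  rw [integral_rpow (Or.inr ⟨hr, fun h => (uIcc_of_le hεa ▸ h).1.not_gt hε⟩), rpowPrimitive,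
    rpowPrimitive, sub_div]

theorem hasSum_integral_div_rpow {f : ℂ → ℂ} {c : ℕ → ℂ} {a ε s : ℝ} (hε : 0 < ε) (hεa : ε ≤ a)
    (hs : ∀ n : ℕ, s ≠ n + 1) (hc : Summable fun n => ‖c n‖ * a ^ n)
    (hf : ∀ x : ℝ, 0 < x → x ≤ a → HasSum (fun n => c n * (x : ℂ) ^ n) (f x)) :
    HasSum (fun n => c n * ((rpowPrimitive (n - s) a - rpowPrimitive (n - s) ε : ℝ) : ℂ))
      (∫ x in ε..a, f x / ((x ^ s : ℝ) : ℂ)) := by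
  obtain ⟨M, hM⟩ := (isCompact_Icc (a := ε) (b := a)).exists_bound_of_continuousOn
    (f := fun x : ℝ => x ^ (-s)) fun x hx => (Real.continuousAt_rpow_const _ _
      (Or.inl (hε.trans_le hx.1).ne')).continuousWithinAt
  have hsplit (n : ℕ) (x : ℝ) (hx : 0 < x) : x ^ ((n : ℝ) - s) = x ^ n * x ^ (-s) := by
    rw [sub_eq_add_neg, Real.rpow_add hx, Real.rpow_natCast]
  have hterm (n : ℕ) : ∫ x in ε..a, c n * ((x ^ ((n : ℝ) - s) : ℝ) : ℂ)
      = c n * ((rpowPrimitive (n - s) a - rpowPrimitive (n - s) ε : ℝ) : ℂ) := by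
    rw [intervalIntegral.integral_const_mul, intervalIntegral.integral_ofReal,
      integral_rpow_eq_rpowPrimitive_sub hε hεa fun h => hs n (by linarith)]
  simp only [← hterm]
  refine hasSum_intervalIntegral_of_norm_le_summable (B := fun n => ‖c n‖ * a ^ n * M)
    (fun n => ?_) (fun n x hx => ?_) (hc.mul_right M) (fun x hx => ?_)
  · refine continuousOn_const.mul (Complex.continuous_ofReal.comp_continuousOn ?_)
    exact continuousOn_id.rpow_const fun x hx => Or.inl (hε.trans_le (uIcc_of_le hεa ▸ hx).1).ne'
  · rw [uIoc_of_le hεa] at hx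
    have hx0 : 0 < x := hε.trans hx.1
    have hpow : ‖x ^ n‖ ≤ a ^ n := by
      rw [Real.norm_eq_abs, abs_of_pos (by positivity)]
      exact pow_le_pow_left₀ hx0.le hx.2 n
    rw [norm_mul, Complex.norm_real, hsplit n x hx0, norm_mul, mul_assoc]
    exact mul_le_mul_of_nonneg_left (mul_le_mul hpow (hM x (Ioc_subset_Icc_self hx))
      (norm_nonneg _) (pow_nonneg (hε.le.trans hεa) n)) (norm_nonneg _)
  · rw [uIoc_of_le hεa] at hx
    have hx0 : 0 < x := hε.trans hx.1
    have hdiv (n : ℕ) :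
        c n * (x : ℂ) ^ n / ((x ^ s : ℝ) : ℂ) = c n * ((x ^ ((n : ℝ) - s) : ℝ) : ℂ) := by
      rw [mul_div_assoc, hsplit n x hx0, Real.rpow_neg hx0.le]
      push_cast
      rfl
    simpa only [hdiv] using (hf x hx0 hx.2).div_const ((x ^ s : ℝ) : ℂ)

theorem rpowPrimitive_nat_add_le {p a t : ℝ} (k : ℕ) (hp : -1 < p) (ha : 0 < a) (ht : 0 ≤ t)
    (hta : t ≤ a) : rpowPrimitive (k + p) t ≤ a ^ k * rpowPrimitive p a := by
  have hp1 : 0 < p + 1 := by linarith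
  have hkp : p + 1 ≤ k + p + 1 := by linarith [k.cast_nonneg (α := ℝ)]
  calc t ^ (k + p + 1) / (k + p + 1)
      ≤ a ^ (k + p + 1) / (p + 1) :=
        div_le_div₀ (by positivity) (Real.rpow_le_rpow ht hta (by linarith)) hp1 hkp
    _ = a ^ k * rpowPrimitive p a := by
        rw [rpowPrimitive, add_assoc, Real.rpow_add ha, Real.rpow_natCast, mul_div_assoc]

theorem norm_mul_rpowPrimitive_nat_add_le {p a t : ℝ} (b : ℂ) (k : ℕ) (hp : -1 < p) (ha : 0 < a)
    (ht : 0 ≤ t) (hta : t ≤ a) :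
    ‖b * (rpowPrimitive (k + p) t : ℂ)‖ ≤ ‖b‖ * a ^ k * rpowPrimitive p a := by
  have hp1 : 0 < k + p + 1 := by linarith [k.cast_nonneg (α := ℝ)]
  rw [norm_mul, Complex.norm_real, Real.norm_of_nonneg (by unfold rpowPrimitive; positivity),
    mul_assoc]
  exact mul_le_mul_of_nonneg_left (rpowPrimitive_nat_add_le k hp ha ht hta) (norm_nonneg b)

theorem summable_mul_rpowPrimitive_nat_add {b : ℕ → ℂ} {p a t : ℝ} (hp : -1 < p) (ha : 0 < a)
    (hb : Summable fun k => ‖b k‖ * a ^ k) (ht : 0 ≤ t) (hta : t ≤ a) :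
    Summable fun k => b k * (rpowPrimitive (k + p) t : ℂ) :=
  (hb.mul_right _).of_norm_bounded fun k =>
    norm_mul_rpowPrimitive_nat_add_le (b k) k hp ha ht hta

theorem tendsto_rpowPrimitive_nhdsGT_zero {r : ℝ} (hr : -1 < r) :
    Tendsto (rpowPrimitive r) (𝓝[>] 0) (𝓝 0) := by
  have hr1 : 0 < r + 1 := by linarith
  have h := (Real.continuousAt_rpow_const 0 _ (Or.inr hr1.le)).tendsto.div_const (r + 1)
  rw [Real.zero_rpow hr1.ne', zero_div] at h
  exact h.mono_left nhdsWithin_le_nhds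

theorem tendsto_tsum_mul_rpowPrimitive_nat_add {b : ℕ → ℂ} {p a : ℝ} (hp : -1 < p) (ha : 0 < a)
    (hb : Summable fun k => ‖b k‖ * a ^ k) :
    Tendsto (fun ε => ∑' k, b k * (rpowPrimitive (k + p) ε : ℂ)) (𝓝[>] 0) (𝓝 0) := by
  have hlim (k : ℕ) : Tendsto (fun ε => b k * (rpowPrimitive (k + p) ε : ℂ)) (𝓝[>] 0) (𝓝 0) := by
    have h := tendsto_rpowPrimitive_nhdsGT_zero (r := k + p) (by linarith [k.cast_nonneg (α := ℝ)])
    simpa using ((Complex.continuous_ofReal.tendsto 0).comp h).const_mul (b k)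
  have hbound : ∀ᶠ ε in 𝓝[>] 0, ∀ k, ‖b k * (rpowPrimitive (k + p) ε : ℂ)‖
      ≤ ‖b k‖ * a ^ k * rpowPrimitive p a := by
    filter_upwards [Ioc_mem_nhdsGT ha] with ε hε k
    exact norm_mul_rpowPrimitive_nat_add_le (b k) k hp ha hε.1.le hε.2
  simpa using tendsto_tsum_of_dominated_convergence (hb.mul_right _) hlim hbound

theorem ne_nat_add_one_of_lt_of_lt {s : ℝ} {m : ℕ} (hms : (m : ℝ) < s) (hsm : s < m + 1) (n : ℕ) :
    s ≠ n + 1 := by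
  rintro rfl
  rcases lt_or_ge n m with h | h
  · have : ((n + 1 : ℕ) : ℝ) ≤ m := by exact_mod_cast h
    push_cast at this
    linarith
  · have : (m : ℝ) ≤ n := by exact_mod_cast h
    linarith

theorem tendsto_integral_div_rpow_sub_finitePart {f : ℂ → ℂ} {c : ℕ → ℂ} {a s : ℝ} {m : ℕ}
    (ha : 0 < a) (hms : (m : ℝ) < s) (hsm : s < m + 1) (hc : Summable fun n => ‖c n‖ * a ^ n)
    (hf : ∀ x : ℝ, 0 < x → x ≤ a → HasSum (fun n => c n * (x : ℂ) ^ n) (f x)) :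
    Tendsto (fun ε : ℝ => (∫ x in ε..a, f x / ((x ^ s : ℝ) : ℂ)) -
        ∑ j ∈ Finset.range m, c j / ((s - j - 1 : ℝ) : ℂ) * ((ε ^ (-(s - j - 1)) : ℝ) : ℂ))
      (𝓝[>] 0) (𝓝 (∑' n, c n * (rpowPrimitive (n - s) a : ℂ))) := by
  set g : ℕ → ℝ → ℂ := fun n t => c n * (rpowPrimitive (n - s) t : ℂ) with hg
  have hs := ne_nat_add_one_of_lt_of_lt hms hsm
  have hp : -1 < (m : ℝ) - s := by linarith
  have hshift (k : ℕ) : ((k + m : ℕ) : ℝ) - s = k + (m - s) := by push_cast; ring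
  have hcm : Summable fun k => ‖c (k + m)‖ * a ^ k := by
    refine ((summable_nat_add_iff m).2 hc).div_const (a ^ m) |>.congr fun k => ?_
    rw [pow_add, ← mul_assoc, mul_div_cancel_right₀ _ (pow_ne_zero m ha.ne')]
  have hsum (t : ℝ) (ht : 0 ≤ t) (hta : t ≤ a) : Summable (g · t) :=
    (summable_nat_add_iff m).1 <| by
      simpa only [hg, hshift] using summable_mul_rpowPrimitive_nat_add hp ha hcm ht hta
  have htail : Tendsto (fun ε => ∑' k, g (k + m) ε) (𝓝[>] 0) (𝓝 0) := by
    simpa only [hg, hshift] using tendsto_tsum_mul_rpowPrimitive_nat_add hp ha hcm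
  have hsingular (j : ℕ) (ε : ℝ) :
      c j / ((s - j - 1 : ℝ) : ℂ) * ((ε ^ (-(s - j - 1)) : ℝ) : ℂ) = -g j ε := by
    have hj : ((s - j - 1 : ℝ) : ℂ) ≠ 0 := Complex.ofReal_ne_zero.2 fun h => hs j (by linarith)
    simp only [hg, rpowPrimitive, show (j : ℝ) - s + 1 = -(s - j - 1) by ring]
    push_cast
    field_simp
  have hbracket : ∀ ε ∈ Ioo 0 a, (∑' n, g n a) - ∑' k, g (k + m) ε =
      (∫ x in ε..a, f x / ((x ^ s : ℝ) : ℂ)) -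
        ∑ j ∈ Finset.range m, c j / ((s - j - 1 : ℝ) : ℂ) * ((ε ^ (-(s - j - 1)) : ℝ) : ℂ) := by
    rintro ε ⟨hε, hεa⟩
    have hI := (hasSum_integral_div_rpow hε hεa.le hs hc hf).unique <| by
      simpa only [hg, mul_sub, Complex.ofReal_sub] using
        (hsum a ha.le le_rfl).hasSum.sub (hsum ε hε.le hεa.le).hasSum
    rw [hI, ← (hsum ε hε.le hεa.le).sum_add_tsum_nat_add m]
    simp only [hsingular, Finset.sum_neg_distrib]
    ring
  simpa using (tendsto_const_nhds.sub htail).congr'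
    (eventuallyEq_of_mem (Ioo_mem_nhdsGT ha) hbracket)

section Circle

open Complex (exp I)

theorem circle_pow_mul_branch_eq {a : ℝ} (s θ : ℝ) (ha : 0 < a) (n : ℕ) :
    ((a : ℂ) * exp (θ * I)) ^ n * (exp (-(s : ℂ) * (Real.log a + θ * I)) * (I * a * exp (θ * I)))
      = ((a ^ ((n : ℝ) - s + 1) : ℝ) : ℂ) * (I * exp (((n : ℝ) - s + 1 : ℝ) * θ * I)) := by
  set ζ : ℂ := Real.log a + θ * I
  have hζ : (a : ℂ) * exp (θ * I) = exp ζ := by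
    rw [Complex.exp_add, ← Complex.ofReal_exp, Real.exp_log ha]
  calc ((a : ℂ) * exp (θ * I)) ^ n * (exp (-(s : ℂ) * ζ) * (I * a * exp (θ * I)))
      = I * (exp (n * ζ) * exp (-(s : ℂ) * ζ) * exp ζ) := by
        rw [mul_assoc I, hζ, ← Complex.exp_nat_mul]; ring
    _ = I * (exp (((n : ℝ) - s + 1 : ℝ) * Real.log a) * exp (((n : ℝ) - s + 1 : ℝ) * θ * I)) := by
        rw [← Complex.exp_add, ← Complex.exp_add, ← Complex.exp_add]
        congr 2
        simp only [ζ]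
        push_cast
        ring
    _ = _ := by
        rw [Real.rpow_def_of_pos ha, mul_comm (Real.log a), Complex.ofReal_exp]; push_cast; ring

theorem integral_I_mul_exp_ofReal_mul_I {r : ℝ} (hr : r ≠ 0) :
    ∫ θ in (0 : ℝ)..(2 * π), I * exp (r * θ * I) = (exp (2 * π * r * I) - 1) / r := by
  have hrI : (r : ℂ) * I ≠ 0 := mul_ne_zero (Complex.ofReal_ne_zero.2 hr) Complex.I_ne_zero
  simp_rw [intervalIntegral.integral_const_mul, mul_right_comm (r : ℂ) _ I,
    integral_exp_mul_complex hrI]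
  simp only [Complex.ofReal_zero, mul_zero, Complex.exp_zero]
  push_cast
  field_simp

theorem hasSum_integral_circle_branch {f : ℂ → ℂ} {c : ℕ → ℂ} {a s : ℝ} (ha : 0 < a)
    (hs : ∀ n : ℕ, s ≠ n + 1) (hc : Summable fun n => ‖c n‖ * a ^ n)
    (hf : ∀ z : ℂ, ‖z‖ = a → HasSum (fun n => c n * z ^ n) (f z)) :
    HasSum (fun n => (exp (-2 * π * s * I) - 1) * (c n * (rpowPrimitive (n - s) a : ℂ)))
      (∫ θ in (0 : ℝ)..(2 * π),
        f (a * exp (θ * I)) * exp (-(s : ℂ) * (Real.log a + θ * I)) * (I * a * exp (θ * I))) := by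
  set F : ℕ → ℝ → ℂ := fun n θ => c n * ((a : ℂ) * exp (θ * I)) ^ n *
    (exp (-(s : ℂ) * (Real.log a + θ * I)) * (I * a * exp (θ * I)))
  have hF (n : ℕ) (θ : ℝ) : F n θ
      = c n * ((a ^ ((n : ℝ) - s + 1) : ℝ) : ℂ) * (I * exp (((n : ℝ) - s + 1 : ℝ) * θ * I)) := by
    simp only [F]
    rw [mul_assoc (c n), circle_pow_mul_branch_eq s θ ha n, ← mul_assoc]
  have hterm (n : ℕ) : ∫ θ in (0 : ℝ)..(2 * π), F n θ
      = (exp (-2 * π * s * I) - 1) * (c n * (rpowPrimitive (n - s) a : ℂ)) := by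
    have hr : (n : ℝ) - s + 1 ≠ 0 := fun h => hs n (by linarith)
    have hw : exp (2 * π * ((n : ℝ) - s + 1 : ℝ) * I) = exp (-2 * π * s * I) := by
      rw [show 2 * π * ((n : ℝ) - s + 1 : ℝ) * I = ((n + 1 : ℕ) : ℂ) * (2 * π * I) + -2 * π * s * I
        by push_cast; ring, Complex.exp_add, Complex.exp_nat_mul_two_pi_mul_I, one_mul]
    simp only [hF, intervalIntegral.integral_const_mul, integral_I_mul_exp_ofReal_mul_I hr, hw,
      rpowPrimitive]
    push_cast
    ring
  have hnorm (n : ℕ) (θ : ℝ) : ‖F n θ‖ = ‖c n‖ * a ^ n * a ^ (1 - s) := by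
    rw [hF, norm_mul, norm_mul, norm_mul, Complex.norm_I, ← Complex.ofReal_mul,
      Complex.norm_exp_ofReal_mul_I,
      Complex.norm_real, Real.norm_of_nonneg (by positivity), mul_one, mul_one, mul_assoc,
      sub_add_eq_add_sub, add_sub_assoc, Real.rpow_add ha, Real.rpow_natCast]
  simp only [← hterm]
  refine hasSum_intervalIntegral_of_norm_le_summable (fun n => by fun_prop)
    (fun n θ _ => (hnorm n θ).le) (hc.mul_right _) (fun θ _ => ?_)
  have hz : ‖(a : ℂ) * exp (θ * I)‖ = a := by
    rw [norm_mul, Complex.norm_exp_ofReal_mul_I, mul_one, Complex.norm_real,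
      Real.norm_of_nonneg ha.le]
  simpa only [F, mul_assoc] using (hf _ hz).mul_right
    (exp (-(s : ℂ) * (Real.log a + θ * I)) * (I * a * exp (θ * I)))

end Circle

theorem Complex.exp_neg_two_pi_mul_I_ne_one {ν : ℝ} (hν0 : 0 < ν) (hν1 : ν < 1) :
    Complex.exp (-2 * π * ν * Complex.I) ≠ 1 := by
  rw [Ne, Complex.exp_eq_one_iff]
  rintro ⟨k, hk⟩
  have hk' : ((-ν : ℝ) : ℂ) = ((k : ℝ) : ℂ) := by
    refine mul_right_cancel₀ Complex.two_pi_I_ne_zero ?_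
    push_cast
    linear_combination hk
  have hνk : -ν = k := by exact_mod_cast hk'
  have h1 : -1 < k := by exact_mod_cast (show (-1 : ℝ) < k by linarith)
  have h0 : k < 0 := by exact_mod_cast (show (k : ℝ) < 0 by linarith)
  omega

theorem finite_part_branch_contour_general (a : ℝ) (ha : 0 < a) (m : ℕ)
    (ν : ℝ) (hν0 : 0 < ν) (hν1 : ν < 1) (f : ℂ → ℂ)
    (U : Set ℂ) (hU : IsOpen U) (hUa : Metric.closedBall 0 a ⊆ U)
    (hf : AnalyticOnNhd ℂ f U) :
    Tendsto (fun ε : ℝ =>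
        (∫ x in ε..a, f x / ((x ^ ((m : ℝ) + ν) : ℝ) : ℂ))
        - (∑ j ∈ Finset.range m,
            iteratedDeriv j f 0 /
                ((j.factorial : ℂ) * (((m : ℝ) + ν - j - 1 : ℝ) : ℂ)) *
              ((ε ^ (-((m : ℝ) + ν - j - 1)) : ℝ) : ℂ)))
      (nhdsWithin 0 (Ioi 0))
      (nhds ((1 / (Complex.exp (-2 * Real.pi * ν * Complex.I) - 1)) *
        ∫ θ in (0:ℝ)..(2 * Real.pi),
          f (a * Complex.exp (θ * Complex.I)) *
            Complex.exp (-((m : ℂ) + ν) * ((Real.log a : ℂ) + θ * Complex.I)) *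
            (Complex.I * a * Complex.exp (θ * Complex.I)))) := by
  obtain ⟨c, hc, hfc, hderiv⟩ := hf.exists_hasSum_pow_of_closedBall_subset ha.le hU hUa
  set s : ℝ := (m : ℝ) + ν with hs_def
  have hms : (m : ℝ) < s := by linarith
  have hsm : s < m + 1 := by linarith
  have hw : Complex.exp (-2 * π * s * Complex.I) = Complex.exp (-2 * π * ν * Complex.I) := by
    rw [show -2 * π * (s : ℂ) * Complex.I = ((-m : ℤ) : ℂ) * (2 * π * Complex.I)
        + -2 * π * ν * Complex.I by rw [hs_def]; push_cast; ring,
      Complex.exp_add, Complex.exp_int_mul_two_pi_mul_I, one_mul]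
  have hcircle := hasSum_integral_circle_branch ha (ne_nat_add_one_of_lt_of_lt hms hsm) hc
    fun z hz => hfc z hz.le
  rw [hw, show (s : ℂ) = (m : ℂ) + ν by rw [hs_def]; push_cast; rfl] at hcircle
  rw [← hcircle.tsum_eq, tsum_mul_left, one_div,
    inv_mul_cancel_left₀ (sub_ne_zero.2 (Complex.exp_neg_two_pi_mul_I_ne_one hν0 hν1))]
  refine (tendsto_integral_div_rpow_sub_finitePart ha hms hsm hc
    fun x hx hxa => hfc x ?_).congr fun ε => ?_
  · rwa [Complex.norm_real, Real.norm_of_nonneg hx.le]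
  · refine congrArg _ (Finset.sum_congr rfl fun j _ => ?_)
    rw [hderiv, mul_div_mul_left _ _ (Nat.cast_ne_zero.2 j.factorial_ne_zero)]

/-- For `a > 0`, an integer `m ≥ 1`, `0 < ν < 1`, and `f : ℂ → ℂ` analytic on
an open set containing the closed disk of radius `a`, the finite part integral
`⨍_0^a f(x)/x^{m+ν} dx` equals `(1/(e^{−2πiν} − 1)) ∫_C f(z) z^{−(m+ν)} dz` over the circle
of radius `a` (parametrized by `z = a e^{iθ}`, with `z^{−(m+ν)} = e^{−(m+ν)(ln a + iθ)}`). -/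
theorem finite_part_branch_contour (a : ℝ) (ha : 0 < a) (m : ℕ) (hm : 1 ≤ m)
    (ν : ℝ) (hν0 : 0 < ν) (hν1 : ν < 1) (f : ℂ → ℂ)
    (U : Set ℂ) (hU : IsOpen U) (hUa : Metric.closedBall 0 a ⊆ U)
    (hf : AnalyticOnNhd ℂ f U) :
    Tendsto (fun ε : ℝ =>
        (∫ x in ε..a, f x / ((x ^ ((m : ℝ) + ν) : ℝ) : ℂ))
        - (∑ j ∈ Finset.range m,
            iteratedDeriv j f 0 /
                ((j.factorial : ℂ) * (((m : ℝ) + ν - j - 1 : ℝ) : ℂ)) *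
              ((ε ^ (-((m : ℝ) + ν - j - 1)) : ℝ) : ℂ)))
      (nhdsWithin 0 (Ioi 0))
      (nhds ((1 / (Complex.exp (-2 * Real.pi * ν * Complex.I) - 1)) *
        ∫ θ in (0:ℝ)..(2 * Real.pi),
          f (a * Complex.exp (θ * Complex.I)) *
            Complex.exp (-((m : ℂ) + ν) * ((Real.log a : ℂ) + θ * Complex.I)) *
            (Complex.I * a * Complex.exp (θ * Complex.I)))) :=
  finite_part_branch_contour_general a ha m ν hν0 hν1 f U hU hUa hf
end

section
/- Let f : ℂ → ℂ be entire and let 0 < ω < a. Then ∫_0^a f(x)/(ω+x) dx = −f(−ω)(ln ω + iπ) + (1/(2πi)) ∫_0^{2π} f(a e^{iθ}) (ln a + iθ) / (ω + a e^{iθ}) · i a e^{iθ} dθ; i.e. the incomplete Stieltjes transform equals −f(−ω)(ln ω + iπ) plus (1/(2πi)) ∫_C f(z) log z /(ω+z) dz over the circle of radius a about the origin traversed counterclockwise, with the branch of log z whose cut is the positive real axis. -/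
/-!
Write `f z = f (-ω) + (ω + z) g z` with `g = dslope f (-ω)` entire. For entire `g` with primitive
`G`, integrating `(log R + θ i) g(z) dz` by parts along `z = R e^{iθ}` leaves the jump
`2π i G(R)` of the logarithm minus `i ∫ G(R e^{iθ}) dθ = 2π i G(0)` (mean value property), that is
`2π i ∫_0^R g`. The pole term is integrated by parts in the same way against the primitive
`θ i + log (1 + ω / z)` of `dz / (ω + z)`, whose circle mean vanishes, giving
`2π i (log (ω + R) + π i)`; on the real side `∫_0^a dx / (ω + x) = log (ω + a) - log ω`.
-/

open Complex MeasureTheory Set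
open scoped Real

theorem intervalIntegral_const_add_mul_I_mul_deriv (c : ℂ) (T : ℝ) {v v' : ℝ → ℂ}
    (hv : ∀ θ, HasDerivAt v (v' θ) θ) (hv' : IntervalIntegrable v' volume 0 T) :
    ∫ θ in 0..T, (c + θ * I) * v' θ = (c + T * I) * v T - c * v 0 - I * ∫ θ in 0..T, v θ := by
  have hu : ∀ θ : ℝ, HasDerivAt (fun t : ℝ => c + t * I) I θ := fun θ => by
    simpa using ((hasDerivAt_id θ).ofReal_comp.mul_const I).const_add c
  rw [intervalIntegral.integral_mul_deriv_eq_deriv_mul (fun θ _ => hu θ) (fun θ _ => hv θ)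
    intervalIntegrable_const hv', intervalIntegral.integral_const_mul]
  simp

theorem Differentiable.intervalIntegral_comp_circleMap {H : ℂ → ℂ} (hH : Differentiable ℂ H)
    (R : ℝ) : ∫ θ in 0..2 * π, H (circleMap 0 R θ) = 2 * π * H 0 := by
  have := hH.diffContOnCl.circleAverage (c := 0) (R := R)
  rw [Real.circleAverage_def, Complex.real_smul] at this
  rw [← this]
  push_cast
  field_simp

/-- With `c = log R`, the factor `c + θ * I` is the branch of `log z` on `|z| = R` cut along the
positive real axis, so this is `∮ F z log z dz` over that circle. -/
noncomputable def logCircleIntegral (c : ℂ) (R : ℝ) (F : ℂ → ℂ) : ℂ :=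
  ∫ θ in 0..2 * π, (c + θ * I) * (F (circleMap 0 R θ) * (circleMap 0 R θ * I))

theorem Differentiable.logCircleIntegral_eq {h : ℂ → ℂ} (hh : Differentiable ℂ h) (c : ℂ)
    (R : ℝ) : logCircleIntegral c R h = 2 * π * I * ∫ x in 0..R, h x := by
  obtain ⟨H, hH⟩ := hh.isExactOn_univ
  have hH' : Differentiable ℂ H := fun z => (hH z trivial).differentiableAt
  have hftc : ∫ x in 0..R, h x = H R - H 0 :=
    intervalIntegral.integral_eq_sub_of_hasDerivAt (fun x _ => (hH x trivial).comp_ofReal)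
      ((hh.continuous.comp continuous_ofReal).intervalIntegrable _ _)
  have hcont := hh.continuous
  rw [logCircleIntegral, intervalIntegral_const_add_mul_I_mul_deriv c _
    (fun θ => (hH _ trivial).comp θ (hasDerivAt_circleMap 0 R θ))
    (Continuous.intervalIntegrable (by fun_prop) _ _), Function.comp_def,
    hH'.intervalIntegral_comp_circleMap, hftc]
  simp [circleMap]
  ring

section PoleInsideCircle

variable {ω : ℂ} {R : ℝ}

theorem add_circleMap_ne_zero (hωR : ‖ω‖ < |R|) (θ : ℝ) : ω + circleMap 0 R θ ≠ 0 := by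
  intro h
  have := congrArg norm (eq_neg_of_add_eq_zero_right h)
  rw [norm_neg, norm_circleMap_zero] at this
  exact hωR.ne this.symm

theorem one_add_div_circleMap_mem_slitPlane (hωR : ‖ω‖ < |R|) (θ : ℝ) :
    1 + ω / circleMap 0 R θ ∈ slitPlane := by
  apply mem_slitPlane_of_norm_lt_one
  rw [norm_div, norm_circleMap_zero]
  exact (div_lt_one ((norm_nonneg ω).trans_lt hωR)).2 hωR

/-- `θ * I + log (1 + ω / z)` is a continuous branch of `log (ω + z) - log R` along
`z = circleMap 0 R θ`; it gains `2 * π * I` over one turn. -/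
theorem hasDerivAt_mul_I_add_log_one_add_div_circleMap (hωR : ‖ω‖ < |R|) (θ : ℝ) :
    HasDerivAt (fun t : ℝ => t * I + log (1 + ω / circleMap 0 R t))
      ((ω + circleMap 0 R θ)⁻¹ * (circleMap 0 R θ * I)) θ := by
  have hz : circleMap 0 R θ ≠ 0 := circleMap_ne_center (abs_pos.1 ((norm_nonneg ω).trans_lt hωR))
  have hsum := add_circleMap_ne_zero hωR θ
  have hq : HasDerivAt (fun t => 1 + ω / circleMap 0 R t) (-(ω * I) / circleMap 0 R θ) θ := by
    refine ((((hasDerivAt_circleMap 0 R θ).inv hz).const_mul ω).const_add 1).congr_deriv ?_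
    field_simp
  have hlin : HasDerivAt (fun t : ℝ => (t : ℂ) * I) I θ := by
    simpa using (hasDerivAt_id θ).ofReal_comp.mul_const I
  refine (hlin.add (hq.clog_real (one_add_div_circleMap_mem_slitPlane hωR θ))).congr_deriv ?_
  rw [one_add_div hz, add_comm (circleMap 0 R θ)]
  field_simp
  ring

theorem intervalIntegral_log_one_add_div_circleMap (hωR : ‖ω‖ < |R|) :
    ∫ θ in 0..2 * π, log (1 + ω / circleMap 0 R θ) = 0 := by
  have hR : 0 < |R| := (norm_nonneg ω).trans_lt hωR
  set F : ℂ → ℂ := fun w => log (1 + ω / R * w)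
  have hF : DiffContOnCl ℂ F (Metric.ball 0 |1|) := by
    refine DifferentiableOn.diffContOnCl_ball (U := {w | 1 + ω / R * w ∈ slitPlane}) ?_ ?_
    · intro w hw
      exact ((differentiableAt_log hw).comp w
        (by fun_prop : DifferentiableAt ℂ (fun w => 1 + ω / R * w) w)).differentiableWithinAt
    · intro w hw
      apply mem_slitPlane_of_norm_lt_one
      rw [mem_closedBall_zero_iff, abs_one] at hw
      rw [norm_mul, norm_div, norm_real, Real.norm_eq_abs]
      calc ‖ω‖ / |R| * ‖w‖ ≤ ‖ω‖ / |R| * 1 := by gcongr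
        _ < 1 := by rw [mul_one, div_lt_one hR]; exact hωR
  have hmean := hF.circleAverage
  rw [← Real.circleAverage_zero_one_congr_inv, Real.circleAverage_def] at hmean
  simp only [F, mul_zero, add_zero, log_one, smul_eq_zero, inv_eq_zero] at hmean
  refine Eq.trans ?_ (hmean.resolve_left (by positivity))
  congr 1 with θ
  simp only [circleMap, zero_add, ofReal_one, one_mul]
  ring_nf

theorem logCircleIntegral_inv_add (c : ℂ) (hωR : ‖ω‖ < |R|) :
    logCircleIntegral c R (fun z => (ω + z)⁻¹) = 2 * π * I * (c + log (1 + ω / R) + π * I) := by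
  have hR : R ≠ 0 := abs_pos.1 ((norm_nonneg ω).trans_lt hωR)
  have hcont : Continuous fun θ => log (1 + ω / circleMap 0 R θ) :=
    (continuous_const.add (continuous_const.div (continuous_circleMap 0 R)
      fun _ => circleMap_ne_center hR)).clog (one_add_div_circleMap_mem_slitPlane hωR)
  rw [logCircleIntegral, intervalIntegral_const_add_mul_I_mul_deriv c _
      (hasDerivAt_mul_I_add_log_one_add_div_circleMap hωR)
      (((continuous_const.add (continuous_circleMap 0 R)).inv₀ (add_circleMap_ne_zero hωR)).mul
        ((continuous_circleMap 0 R).mul continuous_const) |>.intervalIntegrable _ _),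
    intervalIntegral.integral_add
      ((by fun_prop : Continuous fun θ : ℝ => (θ : ℂ) * I).intervalIntegrable _ _)
      (hcont.intervalIntegrable _ _),
    intervalIntegral_log_one_add_div_circleMap hωR, intervalIntegral.integral_mul_const,
    intervalIntegral.integral_ofReal, integral_id]
  simp [circleMap]
  ring

end PoleInsideCircle

theorem differentiable_dslope {f : ℂ → ℂ} {w : ℂ} :
    Differentiable ℂ (dslope f w) ↔ Differentiable ℂ f := by
  rw [← differentiableOn_univ, differentiableOn_dslope Filter.univ_mem, differentiableOn_univ]

theorem eq_add_mul_dslope (f : ℂ → ℂ) (w z : ℂ) : f z = f w + (z - w) * dslope f w z := by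
  rw [← smul_eq_mul, sub_smul_dslope]
  ring

theorem Differentiable.logCircleIntegral_div_add {f : ℂ → ℂ} (hf : Differentiable ℂ f)
    (c : ℂ) {ω : ℂ} {R : ℝ} (hωR : ‖ω‖ < |R|) :
    logCircleIntegral c R (fun z => f z / (ω + z))
      = logCircleIntegral c R (dslope f (-ω))
        + f (-ω) * logCircleIntegral c R (fun z => (ω + z)⁻¹) := by
  have hg := (differentiable_dslope (w := -ω)).2 hf |>.continuous
  have hpole : Continuous fun θ => (ω + circleMap 0 R θ)⁻¹ :=
    (continuous_const.add (continuous_circleMap 0 R)).inv₀ (add_circleMap_ne_zero hωR)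
  simp only [logCircleIntegral]
  rw [← intervalIntegral.integral_const_mul, ← intervalIntegral.integral_add
    (Continuous.intervalIntegrable (by fun_prop) _ _)
    (Continuous.intervalIntegrable (by fun_prop) _ _)]
  refine intervalIntegral.integral_congr fun θ _ => ?_
  have hsum := add_circleMap_ne_zero hωR θ
  rw [eq_add_mul_dslope f (-ω) (circleMap 0 R θ)]
  field_simp
  ring

theorem Differentiable.intervalIntegral_div_add {f : ℂ → ℂ} (hf : Differentiable ℂ f)
    {ω a : ℝ} (hω : 0 < ω) (ha : 0 < ω + a) :
    ∫ x in 0..a, f x / (ω + x)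
      = (∫ x in 0..a, dslope f (-ω) x) + f (-ω) * Real.log ((ω + a) / ω) := by
  have hpos : ∀ x ∈ uIcc 0 a, 0 < ω + x := fun x hx => by
    rcases mem_uIcc.1 hx with h | h <;> linarith [h.1]
  have hne : ∀ x ∈ uIcc 0 a, (ω : ℂ) + x ≠ 0 := fun x hx => by exact_mod_cast (hpos x hx).ne'
  have hinv : ∫ x in 0..a, ((ω : ℂ) + x)⁻¹ = Real.log ((ω + a) / ω) := by
    have : ∫ x in 0..a, (ω + x)⁻¹ = Real.log ((ω + a) / ω) := by
      rw [intervalIntegral.integral_comp_add_left (fun x => x⁻¹), add_zero,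
        integral_inv_of_pos hω ha]
    rw [← this, ← intervalIntegral.integral_ofReal]
    push_cast
    rfl
  have hg : IntervalIntegrable (fun x : ℝ => dslope f (-ω) x) volume 0 a :=
    (((differentiable_dslope (w := -(ω : ℂ))).2 hf).continuous.comp continuous_ofReal
      |>.intervalIntegrable _ _)
  have hpole : IntervalIntegrable (fun x : ℝ => f (-ω) * ((ω : ℂ) + x)⁻¹) volume 0 a :=
    (continuous_const.continuousOn.mul
      ((continuous_const.add continuous_ofReal).continuousOn.inv₀ hne)).intervalIntegrable
  rw [intervalIntegral.integral_congr (g := fun x : ℝ => dslope f (-ω) x + f (-ω) * ((ω : ℂ) + x)⁻¹)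
      fun x hx => ?_, intervalIntegral.integral_add hg hpole, intervalIntegral.integral_const_mul,
    hinv]
  have := hne x hx
  simp only
  rw [eq_add_mul_dslope f (-ω) x]
  field_simp
  ring

/-- For `f : ℂ → ℂ` entire and `0 < ω < a`, the incomplete Stieltjes transform
`∫_0^a f(x)/(ω+x) dx` equals `−f(−ω)(ln ω + iπ)` plus the contour integral
`(1/(2πi)) ∫_C f(z) log z/(ω+z) dz` over the circle of radius `a` (parametrized by
`z = a e^{iθ}`, `0 ≤ θ ≤ 2π`, with `log z = ln a + iθ`). -/
theorem incomplete_stieltjes_contour_rep (f : ℂ → ℂ) (hf : Differentiable ℂ f)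
    (ω a : ℝ) (hω : 0 < ω) (hωa : ω < a) :
    (∫ x in (0:ℝ)..a, f x / ((ω : ℂ) + x))
      = -f (-(ω : ℂ)) * ((Real.log ω : ℂ) + Real.pi * Complex.I)
        + (1 / (2 * Real.pi * Complex.I)) *
          ∫ θ in (0:ℝ)..(2 * Real.pi),
            f (a * Complex.exp (θ * Complex.I)) *
                ((Real.log a : ℂ) + θ * Complex.I) /
                ((ω : ℂ) + a * Complex.exp (θ * Complex.I)) *
              (Complex.I * a * Complex.exp (θ * Complex.I)) := by
  have ha : 0 < a := hω.trans hωa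
  have hωa' : ‖(ω : ℂ)‖ < |a| := by rwa [norm_real, Real.norm_of_nonneg hω.le, abs_of_pos ha]
  have hcontour : (∫ θ in (0:ℝ)..(2 * π), f (a * exp (θ * I)) * ((Real.log a : ℂ) + θ * I) /
      ((ω : ℂ) + a * exp (θ * I)) * (I * a * exp (θ * I)))
      = logCircleIntegral (Real.log a) a (fun z => f z / (ω + z)) := by
    refine intervalIntegral.integral_congr fun θ _ => ?_
    simp only [circleMap_zero]
    ring
  have hlog : (Real.log a : ℂ) + log (1 + ω / a) = Real.log (ω + a) := by
    rw [show (1 + ω / a : ℂ) = ((1 + ω / a : ℝ) : ℂ) by push_cast; rfl, ← ofReal_log (by positivity),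
      ← ofReal_add, ← Real.log_mul ha.ne' (by positivity), mul_one_add, mul_div_cancel₀ _ ha.ne',
      add_comm]
  rw [hcontour, hf.logCircleIntegral_div_add _ hωa', logCircleIntegral_inv_add _ hωa', hlog,
    (differentiable_dslope.2 hf).logCircleIntegral_eq, hf.intervalIntegral_div_add hω (by linarith),
    Real.log_div (by linarith) hω.ne']
  field_simp
  push_cast
  ring
end

section
/- Let f : ℂ → ℂ be entire, 0 < ν < 1, and 0 < ω < a. Then ∫_0^a x^{−ν} f(x)/(ω+x) dx = π f(−ω)/(ω^ν sin(πν)) + (1/(e^{−2πiν} − 1)) ∫_0^{2π} f(a e^{iθ}) e^{−ν(ln a + iθ)} / (ω + a e^{iθ}) · i a e^{iθ} dθ; i.e. the integral equals π f(−ω)/(ω^ν sin πν) plus (1/(e^{−2πiν}−1)) ∫_C f(z) z^{−ν}/(ω+z) dz over the circle of radius a about the origin traversed counterclockwise, where the branch of z^{−ν} is positive on top of the positive real axis. -/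
/-!
Substituting `x = exp w` turns the keyhole contour around `[0, a]` into the boundary of the
rectangle `[L, log a] × [0, 2π]`. Its lower side is the integral over `[exp L, a]`, its upper side
is the same integral times `exp (-2πiν)` (the branch of `z^{-ν}` after one turn), its right side
is the circle of radius `a`, and its left side is a small circle whose contribution vanishes as
`L → -∞` because `ν < 1`. The only pole inside is `w₀ = log ω + πi`, a simple zero of
`ω + exp w`, so the rectangle integral is `2πi` times the residue
`f(-ω) exp(-ν w₀) = f(-ω) ω^{-ν} exp(-iπν)`; dividing by
`1 - exp(-2πiν) = 2i sin(πν) exp(-iπν)` gives the formula.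
-/

open MeasureTheory Filter Set Complex Topology
open scoped Real Interval

/-- The counterclockwise integral over the boundary of `Rectangle z w`, in the form of
`Complex.integral_boundary_rect_eq_zero_of_differentiableOn`. -/
noncomputable def rectangleIntegral (f : ℂ → ℂ) (z w : ℂ) : ℂ :=
  (∫ x : ℝ in z.re..w.re, f (x + z.im * I)) - (∫ x : ℝ in z.re..w.re, f (x + w.im * I)) +
    I * (∫ y : ℝ in z.im..w.im, f (w.re + y * I)) - I * ∫ y : ℝ in z.im..w.im, f (z.re + y * I)

def rectangleBorder (z w : ℂ) : Set ℂ :=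
  [[z.re, w.re]] ×ℂ {z.im, w.im} ∪ {z.re, w.re} ×ℂ [[z.im, w.im]]

section Rectangle

variable {f g : ℂ → ℂ} {z w c : ℂ}

theorem rectangleBorder_subset_rectangle : rectangleBorder z w ⊆ Rectangle z w := by
  rintro ζ (⟨hre, him⟩ | ⟨hre, him⟩)
  · refine ⟨hre, ?_⟩
    rcases him with h | h <;> simp_all
  · refine ⟨?_, him⟩
    rcases hre with h | h <;> simp_all

theorem notMem_rectangleBorder (hre : c.re ∈ Ioo z.re w.re) (him : c.im ∈ Ioo z.im w.im) :
    c ∉ rectangleBorder z w := by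
  rintro (⟨-, h | h⟩ | ⟨h | h, -⟩) <;> simp_all

theorem rectangle_mem_nhds (hre : c.re ∈ Ioo z.re w.re) (him : c.im ∈ Ioo z.im w.im) :
    Rectangle z w ∈ 𝓝 c :=
  mem_of_superset ((isOpen_Ioo.reProdIm isOpen_Ioo).mem_nhds ⟨hre, him⟩)
    (reProdIm_subset_iff.2 (prod_mono (Ioo_subset_Icc_self.trans Icc_subset_uIcc)
      (Ioo_subset_Icc_self.trans Icc_subset_uIcc)))

theorem mapsTo_rectangleBorder :
    MapsTo (fun x : ℝ => x + z.im * I) [[z.re, w.re]] (rectangleBorder z w) ∧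
      MapsTo (fun x : ℝ => x + w.im * I) [[z.re, w.re]] (rectangleBorder z w) ∧
      MapsTo (fun y : ℝ => w.re + y * I) [[z.im, w.im]] (rectangleBorder z w) ∧
      MapsTo (fun y : ℝ => z.re + y * I) [[z.im, w.im]] (rectangleBorder z w) := by
  refine ⟨fun t ht => ?_, fun t ht => ?_, fun t ht => ?_, fun t ht => ?_⟩ <;>
    simp [rectangleBorder, mem_reProdIm, ht]

theorem rectangleIntegral_congr (h : EqOn f g (rectangleBorder z w)) :
    rectangleIntegral f z w = rectangleIntegral g z w := by
  have side : ∀ {a b : ℝ} (γ : ℝ → ℂ), MapsTo γ [[a, b]] (rectangleBorder z w) →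
      ∫ t in a..b, f (γ t) = ∫ t in a..b, g (γ t) :=
    fun γ hγ => intervalIntegral.integral_congr fun t ht => h (hγ ht)
  obtain ⟨hb, ht, hr, hl⟩ := mapsTo_rectangleBorder (z := z) (w := w)
  simp only [rectangleIntegral]
  rw [side _ hb, side _ ht, side _ hr, side _ hl]

theorem rectangleIntegral_add (hf : ContinuousOn f (rectangleBorder z w))
    (hg : ContinuousOn g (rectangleBorder z w)) :
    rectangleIntegral (fun ζ => f ζ + g ζ) z w =
      rectangleIntegral f z w + rectangleIntegral g z w := by
  have side : ∀ {a b : ℝ} (γ : ℝ → ℂ), Continuous γ → MapsTo γ [[a, b]] (rectangleBorder z w) →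
      ∫ t in a..b, f (γ t) + g (γ t) = (∫ t in a..b, f (γ t)) + ∫ t in a..b, g (γ t) :=
    fun γ hγ hmaps => intervalIntegral.integral_add
      ((hf.comp hγ.continuousOn hmaps).intervalIntegrable)
      ((hg.comp hγ.continuousOn hmaps).intervalIntegrable)
  obtain ⟨hb, ht, hr, hl⟩ := mapsTo_rectangleBorder (z := z) (w := w)
  simp only [rectangleIntegral]
  rw [side _ (by fun_prop) hb, side _ (by fun_prop) ht, side _ (by fun_prop) hr,
    side _ (by fun_prop) hl]
  ring

theorem rectangleIntegral_const_mul (a : ℂ) :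
    rectangleIntegral (fun ζ => a * f ζ) z w = a * rectangleIntegral f z w := by
  simp only [rectangleIntegral, intervalIntegral.integral_const_mul]
  ring

theorem rectangleIntegral_eq_zero_of_differentiableOn
    (hf : DifferentiableOn ℂ f (Rectangle z w)) :
    rectangleIntegral f z w = 0 := by
  simpa [rectangleIntegral, smul_eq_mul] using
    integral_boundary_rect_eq_zero_of_differentiableOn f z w hf

theorem integral_mul_inv_sub_eq_log_sub_log {γ : ℝ → ℂ} {v : ℂ} {a b : ℝ}
    (hγ : ∀ t, HasDerivAt γ v t) (hslit : ∀ t ∈ [[a, b]], γ t - c ∈ slitPlane) :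
    ∫ t : ℝ in a..b, v * (γ t - c)⁻¹ = log (γ b - c) - log (γ a - c) := by
  have hγc : Continuous γ := continuous_iff_continuousAt.2 fun t => (hγ t).continuousAt
  refine intervalIntegral.integral_eq_sub_of_hasDerivAt (f := fun t => log (γ t - c))
    (fun t ht => ?_) ?_
  · simpa [div_eq_mul_inv] using ((hγ t).sub_const c).clog_real (hslit t ht)
  · exact (continuousOn_const.mul ((hγc.sub continuous_const).continuousOn.inv₀
      fun t ht => slitPlane_ne_zero (hslit t ht))).intervalIntegrable

theorem log_sub_log_neg_of_im_pos {ζ : ℂ} (hζ : 0 < ζ.im) : log ζ - log (-ζ) = π * I := by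
  apply Complex.ext <;> simp [log_re, log_im, arg_neg_eq_arg_sub_pi_of_im_pos hζ]

theorem rectangleIntegral_inv_sub (hre : c.re ∈ Ioo z.re w.re) (him : c.im ∈ Ioo z.im w.im) :
    rectangleIntegral (fun ζ => (ζ - c)⁻¹) z w = 2 * π * I := by
  -- `log (ζ - c)` is a primitive on the bottom, right and top sides, `log (c - ζ)` on the left
  -- side; the two branches differ by `± π I` at the left corners.
  have horiz : ∀ s : ℝ, s ≠ c.im → ∫ x : ℝ in z.re..w.re, ((x + s * I) - c)⁻¹ =
      log (w.re + s * I - c) - log (z.re + s * I - c) := fun s hs => by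
    simpa using integral_mul_inv_sub_eq_log_sub_log (c := c) (v := 1)
      (γ := fun x : ℝ => x + s * I) (a := z.re) (b := w.re)
      (fun t => by simpa using ((hasDerivAt_id t).ofReal_comp).add_const (s * I))
      (fun t _ => by simp [mem_slitPlane_iff, sub_eq_zero, hs])
  have right : ∫ y : ℝ in z.im..w.im, I * ((w.re + y * I) - c)⁻¹ =
      log (w.re + w.im * I - c) - log (w.re + z.im * I - c) :=
    integral_mul_inv_sub_eq_log_sub_log
      (fun t => by simpa using (((hasDerivAt_id t).ofReal_comp).mul_const I).const_add (w.re : ℂ))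
      (fun t _ => by simp [mem_slitPlane_iff, hre.2])
  have left : ∫ y : ℝ in z.im..w.im, I * ((z.re + y * I) - c)⁻¹ =
      log (c - (z.re + w.im * I)) - log (c - (z.re + z.im * I)) := by
    have h := integral_mul_inv_sub_eq_log_sub_log (c := -c) (v := -I) (a := z.im) (b := w.im)
      (γ := fun y : ℝ => -(z.re + y * I))
      (fun t => by
        have h := ((((hasDerivAt_id t).ofReal_comp).mul_const I).const_add (z.re : ℂ)).neg
        rwa [ofReal_one, one_mul] at h)
      (fun t _ => by simp [mem_slitPlane_iff, hre.1])
    simp only [neg_sub_neg] at h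
    rw [← h]
    refine intervalIntegral.integral_congr fun y _ => ?_
    rw [← neg_sub, inv_neg]
    ring
  have hB := log_sub_log_neg_of_im_pos (ζ := z.re + w.im * I - c) (by simpa using him.2)
  have hA := log_sub_log_neg_of_im_pos (ζ := c - (z.re + z.im * I)) (by simpa using him.1)
  rw [neg_sub] at hA hB
  simp only [rectangleIntegral, ← intervalIntegral.integral_const_mul]
  rw [horiz _ him.1.ne, horiz _ him.2.ne', right, left]
  linear_combination hB + hA

theorem rectangleIntegral_div_sub {Φ : ℂ → ℂ} (hΦ : DifferentiableOn ℂ Φ (Rectangle z w))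
    (hre : c.re ∈ Ioo z.re w.re) (him : c.im ∈ Ioo z.im w.im) :
    rectangleIntegral (fun ζ => Φ ζ / (ζ - c)) z w = 2 * π * I * Φ c := by
  have hK : DifferentiableOn ℂ (dslope Φ c) (Rectangle z w) :=
    (differentiableOn_dslope (rectangle_mem_nhds hre him)).2 hΦ
  have hc := notMem_rectangleBorder hre him
  have hsplit : EqOn (fun ζ => Φ ζ / (ζ - c)) (fun ζ => dslope Φ c ζ + Φ c * (ζ - c)⁻¹)
      (rectangleBorder z w) := fun ζ hζ => by
    have hζc : ζ - c ≠ 0 := sub_ne_zero.2 (ne_of_mem_of_not_mem hζ hc)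
    simp only [dslope_of_ne _ (sub_ne_zero.1 hζc), slope_def_field]
    field_simp
    ring
  have hpole : ContinuousOn (fun ζ => Φ c * (ζ - c)⁻¹) (rectangleBorder z w) :=
    continuousOn_const.mul ((continuousOn_id.sub continuousOn_const).inv₀
      fun ζ hζ => sub_ne_zero.2 (ne_of_mem_of_not_mem hζ hc))
  rw [rectangleIntegral_congr hsplit,
    rectangleIntegral_add (hK.continuousOn.mono rectangleBorder_subset_rectangle) hpole,
    rectangleIntegral_eq_zero_of_differentiableOn hK, rectangleIntegral_const_mul,
    rectangleIntegral_inv_sub hre him]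
  ring

theorem rectangleIntegral_div_of_simple_zero {N D : ℂ → ℂ}
    (hN : DifferentiableOn ℂ N (Rectangle z w)) (hD : DifferentiableOn ℂ D (Rectangle z w))
    (hre : c.re ∈ Ioo z.re w.re) (him : c.im ∈ Ioo z.im w.im) (hDc : D c = 0)
    (hD'c : deriv D c ≠ 0) (hD_ne : ∀ ζ ∈ Rectangle z w, ζ ≠ c → D ζ ≠ 0) :
    rectangleIntegral (fun ζ => N ζ / D ζ) z w = 2 * π * I * (N c / deriv D c) := by
  have hslope : ∀ ζ, ζ ≠ c → dslope D c ζ = D ζ / (ζ - c) := fun ζ hζ => by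
    rw [dslope_of_ne _ hζ, slope_def_field, hDc, sub_zero]
  have hslope_ne : ∀ ζ ∈ Rectangle z w, dslope D c ζ ≠ 0 := fun ζ hζ => by
    rcases eq_or_ne ζ c with rfl | hζc
    · rwa [dslope_same]
    · rw [hslope ζ hζc]
      exact div_ne_zero (hD_ne ζ hζ hζc) (sub_ne_zero.2 hζc)
  have hΦ : DifferentiableOn ℂ (fun ζ => N ζ / dslope D c ζ) (Rectangle z w) :=
    hN.div ((differentiableOn_dslope (rectangle_mem_nhds hre him)).2 hD) hslope_ne
  have hc := notMem_rectangleBorder hre him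
  have hquot : EqOn (fun ζ => N ζ / D ζ) (fun ζ => N ζ / dslope D c ζ / (ζ - c))
      (rectangleBorder z w) := fun ζ hζ => by
    have hζc : ζ ≠ c := ne_of_mem_of_not_mem hζ hc
    simp only [hslope ζ hζc]
    rw [div_div, div_mul_cancel₀ _ (sub_ne_zero.2 hζc)]
  rw [rectangleIntegral_congr hquot, rectangleIntegral_div_sub hΦ hre him, dslope_same]

end Rectangle

theorem tendsto_integral_exp_atBot {E : Type*} [NormedAddCommGroup E] [NormedSpace ℝ E]
    {g : ℝ → E} {a : ℝ} (ha : 0 < a) (hg : IntervalIntegrable g volume 0 a) :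
    Tendsto (fun L => ∫ x in Real.exp L..a, g x) atBot (𝓝 (∫ x in 0..a, g x)) := by
  have hprim : ContinuousWithinAt (fun b => ∫ x in b..a, g x) [[0, a]] 0 := by
    refine ((intervalIntegral.continuousOn_primitive_interval' hg right_mem_uIcc).neg 0
      left_mem_uIcc).congr (fun b _ => ?_) ?_ <;> exact intervalIntegral.integral_symm _ _
  have hexp : Tendsto Real.exp atBot (𝓝[[[0, a]]] 0) := by
    refine tendsto_nhdsWithin_iff.2 ⟨Real.tendsto_exp_atBot, ?_⟩
    filter_upwards [eventually_le_atBot (Real.log a)] with L hL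
    rw [uIcc_of_le ha.le]
    exact ⟨(Real.exp_pos L).le, (Real.exp_le_exp.2 hL).trans (Real.exp_log ha).le⟩
  exact hprim.tendsto.comp hexp

theorem eq_of_exp_eq_of_im_mem {ζ c : ℂ} (h : exp ζ = exp c) (hζ : ζ.im ∈ Icc 0 (2 * π))
    (hc : c.im ∈ Ioo 0 (2 * π)) : ζ = c := by
  obtain ⟨n, hn⟩ := exp_eq_exp_iff_exists_int.1 h
  have him : ζ.im = c.im + n * (2 * π) := by simpa using congrArg im hn
  have hn₁ : (n : ℝ) < 1 :=
    lt_of_mul_lt_mul_right (a := 2 * π) (by linarith [hζ.2, hc.1]) (by positivity)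
  have hn₂ : (-1 : ℝ) < n :=
    lt_of_mul_lt_mul_right (a := 2 * π) (by linarith [hζ.1, hc.2]) (by positivity)
  have hn₀ : n = 0 := by
    have : n < 1 := by exact_mod_cast hn₁
    have : -1 < n := by exact_mod_cast hn₂
    omega
  simpa [hn₀] using hn

theorem one_sub_exp_neg_two_mul_I (x : ℂ) :
    1 - exp (-2 * x * I) = 2 * I * sin x * exp (-x * I) := by
  have h₁ : exp (x * I) * exp (-x * I) = 1 := by rw [← exp_add]; simp
  have h₂ : exp (-2 * x * I) = exp (-x * I) * exp (-x * I) := by rw [← exp_add]; ring_nf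
  rw [sin, h₂]
  linear_combination -h₁ - (exp (-x * I) - exp (x * I)) * exp (-x * I) * I_sq

theorem exp_neg_mul_log_add_pi_mul_I {ν ω : ℝ} (hω : 0 < ω) :
    exp (-ν * (Real.log ω + π * I)) = ((ω ^ ν : ℝ) : ℂ)⁻¹ * exp (-(π * ν) * I) := by
  rw [show -(ν : ℂ) * (Real.log ω + π * I) = ↑(-(ν * Real.log ω)) + -(π * ν) * I by push_cast; ring,
    exp_add, ← ofReal_exp, Real.exp_neg, Real.rpow_def_of_pos hω, mul_comm ν, ofReal_inv]

theorem sin_pi_mul_pos_of_pos_of_lt_one {ν : ℝ} (hν0 : 0 < ν) (hν1 : ν < 1) :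
    0 < Real.sin (π * ν) :=
  Real.sin_pos_of_pos_of_lt_pi (by positivity) (by nlinarith [Real.pi_pos])

theorem one_sub_exp_neg_two_pi_mul_I_ne_zero {ν : ℝ} (hν0 : 0 < ν) (hν1 : ν < 1) :
    1 - exp (-2 * π * ν * I) ≠ 0 := by
  rw [show -2 * (π : ℂ) * ν * I = -2 * ↑(π * ν) * I by push_cast; ring,
    one_sub_exp_neg_two_mul_I, ← ofReal_sin]
  exact mul_ne_zero (mul_ne_zero (by simp) (ofReal_ne_zero.2
    (sin_pi_mul_pos_of_pos_of_lt_one hν0 hν1).ne')) (exp_ne_zero _)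

theorem two_pi_I_mul_exp_div_one_sub_exp {ν ω : ℝ} (hν0 : 0 < ν) (hν1 : ν < 1) (hω : 0 < ω) :
    2 * π * I * exp (-ν * (Real.log ω + π * I)) / (1 - exp (-2 * π * ν * I)) =
      π / (((ω ^ ν : ℝ) : ℂ) * ((Real.sin (π * ν) : ℝ) : ℂ)) := by
  have hsin : ((Real.sin (π * ν) : ℝ) : ℂ) ≠ 0 :=
    ofReal_ne_zero.2 (sin_pi_mul_pos_of_pos_of_lt_one hν0 hν1).ne'
  have hpow : ((ω ^ ν : ℝ) : ℂ) ≠ 0 := ofReal_ne_zero.2 (Real.rpow_pos_of_pos hω ν).ne'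
  rw [exp_neg_mul_log_add_pi_mul_I hω, show -2 * (π : ℂ) * ν * I = -2 * ↑(π * ν) * I by
    push_cast; ring, one_sub_exp_neg_two_mul_I, ← ofReal_sin, ofReal_mul]
  field_simp [exp_ne_zero]

noncomputable def stieltjesIntegrand (f : ℂ → ℂ) (ν ω x : ℝ) : ℂ :=
  ((x ^ (-ν) : ℝ) : ℂ) * f x / ((ω : ℂ) + x)

/-- `stieltjesIntegrand` in the variable `w = log x`, Jacobian `exp w` included. -/
noncomputable def stripIntegrand (f : ℂ → ℂ) (ν ω : ℝ) (w : ℂ) : ℂ :=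
  f (exp w) * exp ((1 - ν) * w) / (ω + exp w)

section Strip

variable {f : ℂ → ℂ} {ν ω : ℝ}

theorem stripIntegrand_ofReal (t : ℝ) :
    stripIntegrand f ν ω t = Real.exp t • stieltjesIntegrand f ν ω (Real.exp t) := by
  rw [stripIntegrand, stieltjesIntegrand, Real.rpow_def_of_pos (Real.exp_pos t), Real.log_exp,
    real_smul, ofReal_exp, ofReal_exp, show (1 - (ν : ℂ)) * t = t + ↑(t * -ν) by
      push_cast; ring, exp_add]
  ring

theorem stripIntegrand_add_two_pi_mul_I (w : ℂ) :
    stripIntegrand f ν ω (w + 2 * π * I) = exp (-2 * π * ν * I) * stripIntegrand f ν ω w := by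
  have hexp : exp (w + 2 * π * I) = exp w := by rw [exp_add, exp_two_pi_mul_I, mul_one]
  rw [stripIntegrand, stripIntegrand, hexp,
    show (1 - (ν : ℂ)) * (w + 2 * π * I) = (1 - ν) * w + -2 * π * ν * I + 2 * π * I by ring,
    exp_add, exp_add, exp_two_pi_mul_I]
  ring

theorem I_mul_integral_stripIntegrand_log_add {a : ℝ} (ha : 0 < a) (b₁ b₂ : ℝ) :
    I * ∫ θ in b₁..b₂, stripIntegrand f ν ω (Real.log a + θ * I) =
      ∫ θ in b₁..b₂, f (a * exp (θ * I)) * exp (-(ν : ℂ) * ((Real.log a : ℂ) + θ * I)) /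
        ((ω : ℂ) + a * exp (θ * I)) * (I * a * exp (θ * I)) := by
  rw [← intervalIntegral.integral_const_mul]
  refine intervalIntegral.integral_congr fun θ _ => ?_
  have hexp : exp (Real.log a + θ * I) = a * exp (θ * I) := by
    rw [exp_add, ← ofReal_exp, Real.exp_log ha]
  simp only [stripIntegrand]
  rw [hexp, show (1 - (ν : ℂ)) * (Real.log a + θ * I) =
      (Real.log a + θ * I) + -ν * (Real.log a + θ * I) by ring, exp_add, hexp]
  ring

theorem continuousOn_stieltjesIntegrand (hf : Continuous f) (hω : 0 ≤ ω) :
    ContinuousOn (stieltjesIntegrand f ν ω) (Ioi 0) := by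
  refine ContinuousOn.div ((continuous_ofReal.comp_continuousOn
    (continuousOn_id.rpow_const fun x hx => Or.inl (ne_of_gt hx))).mul
      (hf.comp continuous_ofReal).continuousOn) (by fun_prop) fun x hx => ?_
  exact_mod_cast (add_pos_of_nonneg_of_pos hω hx).ne'

theorem intervalIntegrable_stieltjesIntegrand (hf : Continuous f) (hν : ν < 1) (hω : 0 < ω)
    {a : ℝ} (ha : 0 ≤ a) : IntervalIntegrable (stieltjesIntegrand f ν ω) volume 0 a := by
  have hrpow : IntervalIntegrable (fun x : ℝ => ((x ^ (-ν) : ℝ) : ℂ)) volume 0 a := by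
    obtain ⟨h₁, h₂⟩ := intervalIntegral.intervalIntegrable_rpow' (a := 0) (b := a) (r := -ν)
      (by linarith)
    exact ⟨h₁.ofReal, h₂.ofReal⟩
  have hquot : ContinuousOn (fun x : ℝ => f x / ((ω : ℂ) + x)) [[0, a]] := by
    refine ContinuousOn.div (by fun_prop) (by fun_prop) fun x hx => ?_
    rw [uIcc_of_le ha] at hx
    exact_mod_cast (add_pos_of_pos_of_nonneg hω hx.1).ne'
  unfold stieltjesIntegrand
  simpa only [mul_div_assoc] using hrpow.mul_continuousOn hquot

theorem integral_stripIntegrand_ofReal (hf : Continuous f) (hω : 0 ≤ ω) (L R : ℝ) :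
    ∫ t in L..R, stripIntegrand f ν ω t =
      ∫ x in Real.exp L..Real.exp R, stieltjesIntegrand f ν ω x := by
  simp only [stripIntegrand_ofReal]
  exact intervalIntegral.integral_deriv_smul_comp'' Real.continuous_exp.continuousOn
    (fun x _ => (Real.hasDerivAt_exp x).hasDerivWithinAt) Real.continuous_exp.continuousOn
    ((continuousOn_stieltjesIntegrand hf hω).mono (by rintro _ ⟨t, -, rfl⟩; exact Real.exp_pos t))

theorem tendsto_integral_stripIntegrand_atBot (hf : Continuous f) (hν : ν < 1) (hω : 0 < ω)
    (b₁ b₂ : ℝ) :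
    Tendsto (fun L : ℝ => ∫ y in b₁..b₂, stripIntegrand f ν ω (L + y * I)) atBot (𝓝 0) := by
  obtain ⟨M, hM⟩ := (isCompact_closedBall (0 : ℂ) 1).exists_bound_of_continuousOn hf.continuousOn
  have hbound : ∀ᶠ L : ℝ in atBot, ∀ y : ℝ,
      ‖stripIntegrand f ν ω (L + y * I)‖ ≤ 2 * M / ω * Real.exp ((1 - ν) * L) := by
    filter_upwards [eventually_le_atBot (min 0 (Real.log (ω / 2)))] with L hL y
    have hexp : ‖exp (L + y * I)‖ = Real.exp L := by simp [norm_exp]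
    have hexp₁ : Real.exp L ≤ 1 := Real.exp_le_one_iff.2 (hL.trans (min_le_left _ _))
    have hexpω : Real.exp L ≤ ω / 2 :=
      (Real.le_log_iff_exp_le (by positivity)).1 (hL.trans (min_le_right _ _))
    have hden : ω / 2 ≤ ‖(ω : ℂ) + exp (L + y * I)‖ := by
      have := norm_sub_norm_le (ω : ℂ) (-exp (L + y * I))
      rw [sub_neg_eq_add, norm_neg, hexp, norm_real, Real.norm_of_nonneg hω.le] at this
      linarith
    have hnum : ‖f (exp (L + y * I))‖ ≤ M := hM _ (by simpa [hexp] using hexp₁)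
    have hM₀ : 0 ≤ M := (norm_nonneg _).trans hnum
    rw [stripIntegrand, norm_div, norm_mul, norm_exp]
    calc ‖f (exp (L + y * I))‖ * Real.exp (((1 - ν) * (L + y * I) : ℂ).re) /
          ‖(ω : ℂ) + exp (L + y * I)‖
        ≤ M * Real.exp ((1 - ν) * L) / (ω / 2) := by
          gcongr
          · simp
        _ = 2 * M / ω * Real.exp ((1 - ν) * L) := by ring
  have hlim : Tendsto (fun L => 2 * M / ω * Real.exp ((1 - ν) * L) * |b₂ - b₁|) atBot (𝓝 0) := by
    simpa using ((Real.tendsto_exp_atBot.comp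
      (tendsto_id.const_mul_atBot (sub_pos.2 hν))).const_mul (2 * M / ω)).mul_const |b₂ - b₁|
  exact squeeze_zero_norm' (hbound.mono fun L hL =>
    intervalIntegral.norm_integral_le_of_norm_le_const fun y _ => hL y) hlim

theorem rectangleIntegral_stripIntegrand_eq_residue (hf : Differentiable ℂ f) (hω : 0 < ω)
    {L R : ℝ} (hL : L < Real.log ω) (hR : Real.log ω < R) :
    rectangleIntegral (stripIntegrand f ν ω) L (R + 2 * π * I) =
      2 * π * I * (f (-ω) * exp (-ν * (Real.log ω + π * I))) := by
  set c : ℂ := Real.log ω + π * I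
  have hexp_c : exp c = -ω := by
    rw [exp_add, ← ofReal_exp, Real.exp_log hω, exp_pi_mul_I]
    ring
  have hc_im : c.im ∈ Ioo 0 (2 * π) := by simp [c, Real.pi_pos.trans_le]
  have hderiv : deriv (fun w => (ω : ℂ) + exp w) c = -ω := by
    rw [deriv_const_add, Complex.deriv_exp, hexp_c]
  have hD_ne : ∀ ζ ∈ Rectangle (L : ℂ) (R + 2 * π * I), ζ ≠ c → (ω : ℂ) + exp ζ ≠ 0 := by
    intro ζ hζ hζc hzero
    refine hζc (eq_of_exp_eq_of_im_mem ?_ ?_ hc_im)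
    · rw [hexp_c]
      linear_combination hzero
    · simpa [uIcc_of_le Real.two_pi_pos.le] using hζ.2
  refine (rectangleIntegral_div_of_simple_zero (N := fun w => f (exp w) * exp ((1 - ν) * w))
    (D := fun w => (ω : ℂ) + exp w) (c := c) (by fun_prop) (by fun_prop)
    (by simpa [c] using ⟨hL, hR⟩) (by simpa [c] using hc_im) (by simp [hexp_c])
    (by simp [hderiv, hω.ne']) hD_ne).trans ?_
  rw [hderiv, hexp_c, show (1 - (ν : ℂ)) * c = c + -ν * c by ring, exp_add c, hexp_c]
  field_simp [ofReal_ne_zero.2 hω.ne']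

theorem rectangleIntegral_stripIntegrand_eq_sides (L R : ℝ) :
    rectangleIntegral (stripIntegrand f ν ω) L (R + 2 * π * I) =
      (1 - exp (-2 * π * ν * I)) * (∫ t in L..R, stripIntegrand f ν ω t) +
        I * (∫ y in (0 : ℝ)..2 * π, stripIntegrand f ν ω (R + y * I)) -
        I * ∫ y in (0 : ℝ)..2 * π, stripIntegrand f ν ω (L + y * I) := by
  have htop : ∫ t in L..R, stripIntegrand f ν ω (t + (2 * π : ℝ) * I) =
      exp (-2 * π * ν * I) * ∫ t in L..R, stripIntegrand f ν ω t := by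
    rw [← intervalIntegral.integral_const_mul]
    refine intervalIntegral.integral_congr fun t _ => ?_
    rw [← stripIntegrand_add_two_pi_mul_I]
    push_cast
    ring_nf
  simp only [rectangleIntegral, ofReal_re, ofReal_im, add_re, add_im, mul_re, mul_im, I_re, I_im,
    re_ofNat, im_ofNat, mul_zero, zero_mul, mul_one, sub_zero, add_zero, zero_add, ofReal_zero]
  rw [htop]
  ring

theorem one_sub_exp_mul_integral_stieltjesIntegrand {a : ℝ} (hf : Differentiable ℂ f)
    (hν : ν < 1) (hω : 0 < ω) (hωa : ω < a) :
    (1 - exp (-2 * π * ν * I)) * ∫ x in (0 : ℝ)..a, stieltjesIntegrand f ν ω x =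
      2 * π * I * (f (-ω) * exp (-ν * (Real.log ω + π * I))) -
        I * ∫ y in (0 : ℝ)..2 * π, stripIntegrand f ν ω (Real.log a + y * I) := by
  have ha : 0 < a := hω.trans hωa
  have hcontour : ∀ L < Real.log ω,
      (1 - exp (-2 * π * ν * I)) * (∫ x in Real.exp L..a, stieltjesIntegrand f ν ω x) -
        I * (∫ y in (0 : ℝ)..2 * π, stripIntegrand f ν ω (L + y * I)) =
      2 * π * I * (f (-ω) * exp (-ν * (Real.log ω + π * I))) -
        I * ∫ y in (0 : ℝ)..2 * π, stripIntegrand f ν ω (Real.log a + y * I) := by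
    intro L hL
    have h := rectangleIntegral_stripIntegrand_eq_residue (ν := ν) hf hω hL
      (Real.log_lt_log hω hωa)
    rw [rectangleIntegral_stripIntegrand_eq_sides,
      integral_stripIntegrand_ofReal hf.continuous hω.le, Real.exp_log ha] at h
    linear_combination h
  have hlim := ((tendsto_integral_exp_atBot ha (intervalIntegrable_stieltjesIntegrand
    hf.continuous hν hω ha.le)).const_mul (1 - exp (-2 * π * ν * I))).sub
      ((tendsto_integral_stripIntegrand_atBot hf.continuous hν hω 0 (2 * π)).const_mul I)
  simpa using tendsto_nhds_unique hlim (tendsto_const_nhds.congr'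
    ((eventually_lt_atBot _).mono fun L hL => (hcontour L hL).symm))

end Strip

/-- For `f : ℂ → ℂ` entire, `0 < ν < 1`, and `0 < ω < a`,
`∫_0^a x^{−ν} f(x)/(ω+x) dx = π f(−ω)/(ω^ν sin(πν))` plus the contour integral
`(1/(e^{−2πiν} − 1)) ∫_C f(z) z^{−ν}/(ω+z) dz` over the circle of radius `a`
(parametrized by `z = a e^{iθ}`, with `z^{−ν} = e^{−ν(ln a + iθ)}`). -/
theorem incomplete_stieltjes_branch_contour_rep (f : ℂ → ℂ) (hf : Differentiable ℂ f)
    (ν : ℝ) (hν0 : 0 < ν) (hν1 : ν < 1) (ω a : ℝ) (hω : 0 < ω) (hωa : ω < a) :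
    (∫ x in (0:ℝ)..a, ((x ^ (-ν) : ℝ) : ℂ) * f x / ((ω : ℂ) + x))
      = (Real.pi : ℂ) * f (-(ω : ℂ)) /
          (((ω ^ ν : ℝ) : ℂ) * ((Real.sin (Real.pi * ν) : ℝ) : ℂ))
        + (1 / (Complex.exp (-2 * Real.pi * ν * Complex.I) - 1)) *
          ∫ θ in (0:ℝ)..(2 * Real.pi),
            f (a * Complex.exp (θ * Complex.I)) *
                Complex.exp (-(ν : ℂ) * ((Real.log a : ℂ) + θ * Complex.I)) /
                ((ω : ℂ) + a * Complex.exp (θ * Complex.I)) *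
              (Complex.I * a * Complex.exp (θ * Complex.I)) := by
  rw [← I_mul_integral_stripIntegrand_log_add (hω.trans hωa)]
  change ∫ x in (0 : ℝ)..a, stieltjesIntegrand f ν ω x = _
  have hE := one_sub_exp_neg_two_pi_mul_I_ne_zero hν0 hν1
  rw [eq_div_of_mul_eq hE ((mul_comm _ _).trans
      (one_sub_exp_mul_integral_stieltjesIntegrand hf hν1 hω hωa)),
    mul_div_right_comm (π : ℂ), ← two_pi_I_mul_exp_div_one_sub_exp hν0 hν1 hω,
    ← neg_sub (1 : ℂ), one_div_neg_eq_neg_one_div]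
  ring
end

section
/- For every a > 0 and every j ∈ ℕ, the finite part integral of ∫_0^a e^{−x}/x^{j+1} dx equals −Σ_{k=0}^{j−1} (−1)^k/(k! (j−k) a^{j−k}) + ((−1)^j/j!) ln a + Σ_{k=j+1}^∞ (−1)^k a^{k−j}/(k! (k−j)); that is, lim_{ε→0⁺} [ ∫_ε^a e^{−x}/x^{j+1} dx − Σ_{k=0}^{j−1} ((−1)^k/(k! (j−k))) ε^{−(j−k)} + ((−1)^j/j!) ln ε ] equals that expression (the infinite series over k ≥ j+1 being absolutely convergent). -/
/-!
Expanding `e^{-x} = ∑ₖ (-1)^k x^k / k!` and integrating term by term over `[ε, a]` (the series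
converges dominatedly there) gives `∫_ε^a e^{-x}/x^{j+1} dx = F a - F ε`, where `F` collects the
primitives of the monomials `x^{k-j-1}`. The subtracted terms of the finite part are exactly the
singular part and the logarithm in `-F ε`, so what is left is `F a` minus the tail series at `ε`,
which is `O(ε)`.
-/

open MeasureTheory Filter Set Real Topology Nat

noncomputable def expTailTerm (j : ℕ) (x : ℝ) (i : ℕ) : ℝ :=
  (-1) ^ (j + 1 + i) * x ^ (i + 1) / ((j + 1 + i)! * (i + 1))

lemma norm_expTailTerm_le (j : ℕ) (x : ℝ) (i : ℕ) :
    ‖expTailTerm j x i‖ ≤ |x| * (|x| ^ i / i !) := by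
  have hle : (i ! : ℝ) ≤ (j + 1 + i)! * (i + 1) := by
    have : (i ! : ℝ) ≤ (j + 1 + i)! := by exact_mod_cast factorial_le (by omega)
    nlinarith [show (0 : ℝ) ≤ i from i.cast_nonneg]
  rw [expTailTerm, norm_div, norm_mul, norm_pow, norm_pow, norm_neg, norm_one, one_pow, one_mul,
    Real.norm_eq_abs, Real.norm_eq_abs,
    abs_of_pos (by positivity : (0 : ℝ) < (j + 1 + i)! * (i + 1)), _root_.pow_succ',
    mul_div_assoc]
  gcongr

lemma summable_norm_expTailTerm (j : ℕ) (x : ℝ) : Summable fun i => ‖expTailTerm j x i‖ :=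
  ((summable_pow_div_factorial |x|).mul_left |x|).of_nonneg_of_le (fun _ => norm_nonneg _)
    (norm_expTailTerm_le j x)

lemma summable_expTailTerm (j : ℕ) (x : ℝ) : Summable (expTailTerm j x) :=
  (summable_norm_expTailTerm j x).of_norm

lemma norm_tsum_expTailTerm_le (j : ℕ) (x : ℝ) :
    ‖∑' i, expTailTerm j x i‖ ≤ |x| * exp |x| :=
  calc ‖∑' i, expTailTerm j x i‖
      ≤ ∑' i, ‖expTailTerm j x i‖ := norm_tsum_le_tsum_norm (summable_norm_expTailTerm j x)
    _ ≤ ∑' i, |x| * (|x| ^ i / i !) :=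
      (summable_norm_expTailTerm j x).tsum_le_tsum (norm_expTailTerm_le j x)
        ((summable_pow_div_factorial |x|).mul_left |x|)
    _ = |x| * exp |x| := by
      rw [tsum_mul_left, exp_eq_exp_ℝ, (NormedSpace.expSeries_div_hasSum_exp |x|).tsum_eq]

lemma tendsto_tsum_expTailTerm_zero (j : ℕ) :
    Tendsto (fun x => ∑' i, expTailTerm j x i) (𝓝 0) (𝓝 0) := by
  refine squeeze_zero_norm (norm_tsum_expTailTerm_le j) ?_
  have h : Continuous fun x : ℝ => |x| * exp |x| := by fun_prop
  simpa using h.tendsto 0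

lemma hasSum_exp_neg (x : ℝ) : HasSum (fun k => (-1) ^ k / k ! * x ^ k) (exp (-x)) := by
  have h : HasSum (fun k => (-x) ^ k / k !) (exp (-x)) := by
    rw [exp_eq_exp_ℝ]
    exact NormedSpace.expSeries_div_hasSum_exp (-x)
  convert h using 2 with k
  rw [neg_pow]
  ring

lemma hasSum_integral_exp_neg_div_pow (n : ℕ) {ε A : ℝ} (hε : 0 < ε) (hεA : ε ≤ A) :
    HasSum (fun k => (-1) ^ k / k ! * ∫ x in ε..A, x ^ k / x ^ n)
      (∫ x in ε..A, exp (-x) / x ^ n) := by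
  simp only [← intervalIntegral.integral_const_mul]
  refine intervalIntegral.hasSum_integral_of_dominated_convergence
    (fun k _ => A ^ k / k ! / ε ^ n) (fun k => (by fun_prop : Measurable _).aestronglyMeasurable)
    (fun k => ?_)
    (.of_forall fun _ _ => (summable_pow_div_factorial A).div_const _) intervalIntegrable_const
    (.of_forall fun x _ => ?_)
  · refine .of_forall fun x hx => ?_
    rw [uIoc_of_le hεA] at hx
    have hx0 : 0 < x := hε.trans hx.1
    rw [norm_mul, norm_div, norm_div, norm_pow, norm_neg, norm_one, one_pow, norm_pow, norm_pow,
      Real.norm_natCast, Real.norm_of_nonneg hx0.le, one_div_mul_eq_div, div_right_comm]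
    gcongr
    exacts [div_nonneg (pow_nonneg (hε.le.trans hεA) k) (by positivity), hx.2, hx.1.le]
  · simp only [mul_div_assoc']
    exact (hasSum_exp_neg x).div_const _

lemma integral_pow_add_div_pow (i n : ℕ) (ε A : ℝ) :
    ∫ x in ε..A, x ^ (i + n) / x ^ n = (A ^ (i + 1) - ε ^ (i + 1)) / (i + 1) := by
  rw [← integral_pow]
  refine intervalIntegral.integral_congr_ae ((volume.ae_ne 0).mono fun x hx _ => ?_)
  rw [pow_add, mul_div_cancel_right₀ _ (pow_ne_zero n hx)]

lemma integral_pow_div_pow_succ_self (j : ℕ) {ε A : ℝ} (hε : 0 < ε) (hA : 0 < A) :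
    ∫ x in ε..A, x ^ j / x ^ (j + 1) = log A - log ε := by
  rw [← log_div hA.ne' hε.ne', ← integral_inv_of_pos hε hA]
  refine intervalIntegral.integral_congr fun x hx => ?_
  have hx0 : x ≠ 0 := ne_of_mem_of_not_mem hx (notMem_uIcc_of_lt hε hA)
  simp only [pow_succ, div_mul_cancel_left₀ (pow_ne_zero j hx0)]

lemma integral_pow_div_pow_succ_of_lt {j k : ℕ} (hkj : k < j) {ε A : ℝ} (hε : 0 < ε)
    (hA : 0 < A) :
    ∫ x in ε..A, x ^ k / x ^ (j + 1) =
      1 / ((j - k) * ε ^ (j - k)) - 1 / ((j - k) * A ^ (j - k)) := by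
  have h0 : (0 : ℝ) ∉ uIcc ε A := notMem_uIcc_of_lt hε hA
  have hzpow : EqOn (fun x : ℝ => x ^ k / x ^ (j + 1)) (fun x => x ^ ((k : ℤ) - (j + 1)))
      (uIcc ε A) := by
    intro x hx
    simp only [zpow_sub₀ (ne_of_mem_of_not_mem hx h0), zpow_natCast]
    norm_cast
  rw [intervalIntegral.integral_congr hzpow, integral_zpow (.inr ⟨by omega, h0⟩)]
  have hd : (k : ℤ) - (j + 1) + 1 = -((j - k : ℕ) : ℤ) := by omega
  have hd' : ((k : ℤ) - (j + 1) : ℤ) + (1 : ℝ) = -(j - k) := by push_cast; ring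
  rw [hd, zpow_neg, zpow_neg, zpow_natCast, zpow_natCast, hd']
  have hjk : (j : ℝ) - k ≠ 0 := sub_ne_zero.2 (by exact_mod_cast hkj.ne')
  field_simp
  ring

noncomputable def expSingularPart (j : ℕ) (x : ℝ) : ℝ :=
  ∑ k ∈ Finset.range j, (-1) ^ k / (k ! * (j - k) * x ^ (j - k))

/-- Termwise primitive of `e^{-x} / x^{j+1} = ∑ₖ (-1)^k x^{k-j-1} / k!`: the terms `k < j` give
the singular part, `k = j` the logarithm and `k = j + 1 + i` the convergent tail. -/
noncomputable def expNegDivPowPrimitive (j : ℕ) (x : ℝ) : ℝ :=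
  -expSingularPart j x + (-1) ^ j / j ! * log x + ∑' i, expTailTerm j x i

lemma integral_exp_neg_div_pow_succ {j : ℕ} {ε a : ℝ} (hε : 0 < ε) (hεa : ε ≤ a) :
    ∫ x in ε..a, exp (-x) / x ^ (j + 1) =
      expNegDivPowPrimitive j a - expNegDivPowPrimitive j ε := by
  have ha := hε.trans_le hεa
  have hsum := hasSum_integral_exp_neg_div_pow (j + 1) hε hεa
  have hsingular : ∀ k ∈ Finset.range j, (-1) ^ k / k ! * ∫ x in ε..a, x ^ k / x ^ (j + 1) =
      (-1) ^ k / (k ! * (j - k) * ε ^ (j - k)) - (-1) ^ k / (k ! * (j - k) * a ^ (j - k)) := by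
    intro k hk
    rw [integral_pow_div_pow_succ_of_lt (Finset.mem_range.1 hk) hε ha, mul_sub,
      _root_.div_mul_div_comm, _root_.div_mul_div_comm, mul_one, ← mul_assoc, ← mul_assoc]
  have htail : ∀ i : ℕ, (-1) ^ (i + (j + 1)) / (i + (j + 1))! *
      (∫ x in ε..a, x ^ (i + (j + 1)) / x ^ (j + 1)) =
        expTailTerm j a i - expTailTerm j ε i := by
    intro i
    rw [integral_pow_add_div_pow, _root_.div_mul_div_comm, mul_sub, sub_div, expTailTerm,
      expTailTerm, Nat.add_comm i (j + 1)]
  rw [← hsum.tsum_eq, ← hsum.summable.sum_add_tsum_nat_add (j + 1), Finset.sum_range_succ,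
    Finset.sum_congr rfl hsingular, Finset.sum_sub_distrib, integral_pow_div_pow_succ_self j hε ha,
    tsum_congr htail, (summable_expTailTerm j a).tsum_sub (summable_expTailTerm j ε),
    expNegDivPowPrimitive, expNegDivPowPrimitive, expSingularPart, expSingularPart]
  ring

/-- For every `a > 0` and `j ∈ ℕ`, the finite part integral of
`∫_0^a e^{−x}/x^{j+1} dx` equals
`−Σ_{k<j} (−1)^k/(k!(j−k)a^{j−k}) + ((−1)^j/j!) ln a + Σ_{k≥j+1} (−1)^k a^{k−j}/(k!(k−j))`,
the infinite series (written with `k = j+1+i`) being absolutely convergent. -/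
theorem finite_part_exp_integral (a : ℝ) (ha : 0 < a) (j : ℕ) :
    Summable (fun i : ℕ =>
      (-1 : ℝ) ^ (j + 1 + i) * a ^ (i + 1) / ((j + 1 + i).factorial * (i + 1))) ∧
    Tendsto (fun ε : ℝ =>
        (∫ x in ε..a, Real.exp (-x) / x ^ (j + 1))
        - (∑ k ∈ Finset.range j,
            (-1 : ℝ) ^ k / ((k.factorial : ℝ) * ((j : ℝ) - k) * ε ^ (j - k)))
        + (-1 : ℝ) ^ j / (j.factorial : ℝ) * Real.log ε)
      (nhdsWithin 0 (Ioi 0))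
      (nhds (-(∑ k ∈ Finset.range j,
          (-1 : ℝ) ^ k / ((k.factorial : ℝ) * ((j : ℝ) - k) * a ^ (j - k)))
        + (-1 : ℝ) ^ j / (j.factorial : ℝ) * Real.log a
        + ∑' i : ℕ,
            (-1 : ℝ) ^ (j + 1 + i) * a ^ (i + 1) /
              ((j + 1 + i).factorial * (i + 1)))) := by
  refine ⟨summable_expTailTerm j a, ?_⟩
  have hprimitive : Tendsto (fun ε => expNegDivPowPrimitive j a - ∑' i, expTailTerm j ε i)
      (𝓝[>] 0) (𝓝 (expNegDivPowPrimitive j a)) := by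
    simpa using tendsto_const_nhds.sub
      ((tendsto_tsum_expTailTerm_zero j).mono_left nhdsWithin_le_nhds)
  refine hprimitive.congr' ?_
  filter_upwards [Ioc_mem_nhdsGT ha] with ε hε
  rw [integral_exp_neg_div_pow_succ hε.1 hε.2, expNegDivPowPrimitive, expNegDivPowPrimitive,
    expSingularPart, expSingularPart]
  ring
end

section
/- Let ω > 0, let s ≥ 1 be an integer, and let 0 < ν < 1. Then lim_{a→∞} lim_{ε→0⁺} [ ∫_ε^a 1/((ω+x) x^{s+ν}) dx − Σ_{j=0}^{s−1} ((−1)^j / (ω^{j+1} (s+ν−j−1))) ε^{−(s+ν−j−1)} ] = (−1)^s π / (ω^{s+ν} sin(πν)); that is, the finite part integral of the divergent integral ∫_0^∞ 1/((ω+x) x^{s+ν}) dx equals (−1)^s π / (ω^{s+ν} sin πν). -/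
/-!
Expanding `1 / (ω + x) = ∑_{j<s} (-1)^j x^j / ω^(j+1) + (-x/ω)^s / (ω + x)` splits the integrand
into the powers `x^(j-s-ν)`, whose integrals over `[ε, a]` contribute at `ε` exactly the
counterterm, and `(-1)^s ω^(-s) x^(-ν) / (ω + x)`, which is integrable on `(0, ∞)`. So the
finite part over `[0, a]` is `(-1)^s ω^(-s) ∫_0^a x^(-ν) / (ω + x) dx` minus the counterterm at
`a`, which vanishes as `a → ∞`. The remaining Stieltjes integral is `ω^(-ν) π / sin (πν)`: scale
to `ω = 1`, substitute `x = t / (1 - t)` to get Euler's `B(1 - ν, ν)`, and apply the reflection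
formula `Γ(ν) Γ(1 - ν) = π / sin (πν)`.
-/

open MeasureTheory Filter Set Topology

theorem integral_rpow_neg_mul_one_sub_rpow_sub_one {ν : ℝ} (hν0 : 0 < ν) (hν1 : ν < 1) :
    ∫ t in (0 : ℝ)..1, t ^ (-ν) * (1 - t) ^ (ν - 1) = Real.pi / Real.sin (Real.pi * ν) := by
  have hbeta : Complex.betaIntegral (1 - ν) ν
      = ((∫ t in (0 : ℝ)..1, t ^ (-ν) * (1 - t) ^ (ν - 1) : ℝ) : ℂ) := by
    rw [Complex.betaIntegral, ← intervalIntegral.integral_ofReal]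
    refine intervalIntegral.integral_congr_ae (Eventually.of_forall fun t ht => ?_)
    rw [uIoc_of_le zero_le_one] at ht
    rw [Complex.ofReal_mul, Complex.ofReal_cpow ht.1.le, Complex.ofReal_cpow (by linarith [ht.2])]
    push_cast
    ring_nf
  have hreflection : Complex.betaIntegral (1 - ν) ν = (Real.pi / Real.sin (Real.pi * ν) : ℝ) := by
    have h := Complex.Gamma_mul_Gamma_eq_betaIntegral (s := 1 - ν) (t := ν)
      (by simpa using hν1) (by simpa using hν0)
    rw [sub_add_cancel, Complex.Gamma_one, one_mul, mul_comm,
      Complex.Gamma_mul_Gamma_one_sub] at h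
    rw [← h]
    push_cast
    ring_nf
  exact_mod_cast hbeta.symm.trans hreflection

theorem integral_Ioi_rpow_neg_div_one_add {ν : ℝ} (hν0 : 0 < ν) (hν1 : ν < 1) :
    ∫ x in Ioi (0 : ℝ), x ^ (-ν) / (1 + x) = Real.pi / Real.sin (Real.pi * ν) := by
  set φ : ℝ → ℝ := fun t => t / (1 - t)
  have himage : φ '' Ioo 0 1 = Ioi 0 := by
    ext y
    refine ⟨fun ⟨t, ⟨ht0, ht1⟩, hty⟩ => hty ▸ div_pos ht0 (sub_pos.2 ht1), fun hy => ?_⟩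
    have hy : 0 < y := hy
    refine ⟨y / (1 + y), ⟨by positivity, (div_lt_one (by positivity)).2 (by linarith)⟩, ?_⟩
    simp only [φ]
    field_simp
    ring
  have hderiv : ∀ t ∈ Ioo (0 : ℝ) 1, HasDerivWithinAt φ (((1 - t) ^ 2)⁻¹) (Ioo 0 1) t := by
    intro t ht
    have h1t : 1 - t ≠ 0 := (sub_pos.2 ht.2).ne'
    refine (((hasDerivAt_id t).div ((hasDerivAt_id t).const_sub 1) h1t).congr_deriv ?_)
      |>.hasDerivWithinAt
    simp
  have hinj : InjOn φ (Ioo 0 1) := by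
    intro t₁ ht₁ t₂ ht₂ h
    have := (sub_pos.2 ht₁.2).ne'
    have := (sub_pos.2 ht₂.2).ne'
    simp only [φ] at h
    field_simp at h
    linarith
  have hintegrand : ∀ t ∈ Ioo (0 : ℝ) 1,
      |((1 - t) ^ 2)⁻¹| • ((φ t) ^ (-ν) / (1 + φ t)) = t ^ (-ν) * (1 - t) ^ (ν - 1) := by
    intro t ⟨ht0, ht1⟩
    have hu : 0 < 1 - t := sub_pos.2 ht1
    have h1φ : 1 + φ t = (1 - t)⁻¹ := by simp only [φ]; field_simp; ring
    rw [smul_eq_mul, abs_of_pos (by positivity), h1φ, Real.div_rpow ht0.le hu.le,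
      Real.rpow_neg hu.le, Real.rpow_sub hu, Real.rpow_one]
    field_simp
  rw [← himage, integral_image_eq_integral_abs_deriv_smul measurableSet_Ioo hderiv hinj,
    setIntegral_congr_fun measurableSet_Ioo hintegrand, ← integral_Ioc_eq_integral_Ioo,
    ← intervalIntegral.integral_of_le zero_le_one]
  exact integral_rpow_neg_mul_one_sub_rpow_sub_one hν0 hν1

theorem integral_rpow_neg_sub_one {d ε a : ℝ} (hd : d ≠ 0) (hε : 0 < ε) (ha : 0 < a) :
    ∫ x in ε..a, x ^ (-d - 1) = (ε ^ (-d) - a ^ (-d)) / d := by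
  have h0 : (0 : ℝ) ∉ uIcc ε a := fun h => (lt_min hε ha).not_ge h.1
  rw [integral_rpow (Or.inr ⟨by simpa using hd, h0⟩), sub_add_cancel, div_neg, ← neg_div, neg_sub]

section StieltjesKernel

variable {ω ν : ℝ}

theorem natCast_add_sub_natCast_sub_one_pos (hν0 : 0 < ν) {s j : ℕ} (hj : j ∈ Finset.range s) :
    0 < (s : ℝ) + ν - j - 1 := by
  have : (j : ℝ) + 1 ≤ s := by exact_mod_cast Finset.mem_range.1 hj
  linarith

theorem continuousOn_rpow_neg_div_add (hω : 0 ≤ ω) :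
    ContinuousOn (fun x : ℝ => x ^ (-ν) / (ω + x)) (Ioi 0) :=
  ContinuousOn.div (fun x hx => (Real.continuousAt_rpow_const x (-ν)
      (Or.inl (ne_of_gt hx))).continuousWithinAt)
    (continuous_const.add continuous_id).continuousOn
    (fun x (hx : 0 < x) => by positivity)

theorem integrableOn_Ioi_rpow_neg_div_add (hω : 0 < ω) (hν0 : 0 < ν) (hν1 : ν < 1) :
    IntegrableOn (fun x : ℝ => x ^ (-ν) / (ω + x)) (Ioi 0) := by
  have hmeas : AEStronglyMeasurable (fun x : ℝ => x ^ (-ν) / (ω + x)) (volume.restrict (Ioi 0)) :=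
    (continuousOn_rpow_neg_div_add hω.le).aestronglyMeasurable measurableSet_Ioi
  rw [← Ioc_union_Ioi_eq_Ioi zero_le_one]
  refine IntegrableOn.union ?near_zero ?near_infinity
  case near_zero =>
    have hdom : IntegrableOn (fun x : ℝ => x ^ (-ν) * ω⁻¹) (Ioc 0 1) :=
      (intervalIntegrable_iff_integrableOn_Ioc_of_le zero_le_one).1
        ((intervalIntegral.intervalIntegrable_rpow' (by linarith)).mul_const _)
    refine hdom.mono' (hmeas.mono_set Ioc_subset_Ioi_self) ?_
    filter_upwards [ae_restrict_mem measurableSet_Ioc] with x hx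
    have hx0 : 0 < x := hx.1
    rw [Real.norm_of_nonneg (by positivity), div_eq_mul_inv]
    gcongr
    linarith
  case near_infinity =>
    have hdom : IntegrableOn (fun x : ℝ => x ^ (-ν - 1)) (Ioi 1) :=
      integrableOn_Ioi_rpow_of_lt (by linarith) one_pos
    refine hdom.mono' (hmeas.mono_set (Ioi_subset_Ioi zero_le_one)) ?_
    filter_upwards [ae_restrict_mem measurableSet_Ioi] with x (hx : 1 < x)
    have hx0 : 0 < x := by linarith
    rw [Real.norm_of_nonneg (by positivity), Real.rpow_sub_one hx0.ne']
    gcongr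
    linarith

theorem integral_Ioi_rpow_neg_div_add (hω : 0 < ω) (hν0 : 0 < ν) (hν1 : ν < 1) :
    ∫ x in Ioi (0 : ℝ), x ^ (-ν) / (ω + x)
      = ω ^ (-ν) * (Real.pi / Real.sin (Real.pi * ν)) := by
  have hscale : ∀ x ∈ Ioi (0 : ℝ),
      (ω * x) ^ (-ν) / (ω + ω * x) = ω⁻¹ * ω ^ (-ν) * (x ^ (-ν) / (1 + x)) := by
    intro x (hx : 0 < x)
    rw [Real.mul_rpow hω.le hx.le, show ω + ω * x = ω * (1 + x) by ring]
    field_simp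
  have h := integral_comp_mul_left_Ioi (fun x : ℝ => x ^ (-ν) / (ω + x)) 0 hω
  rw [mul_zero, setIntegral_congr_fun measurableSet_Ioi hscale, integral_const_mul,
    integral_Ioi_rpow_neg_div_one_add hν0 hν1, smul_eq_mul, eq_inv_mul_iff_mul_eq₀ hω.ne'] at h
  rw [← h, ← mul_assoc, ← mul_assoc, mul_inv_cancel₀ hω.ne', one_mul]

theorem add_mul_sum_neg_pow_div_pow_succ (hω : ω ≠ 0) (x : ℝ) (s : ℕ) :
    (ω + x) * ∑ j ∈ Finset.range s, (-1) ^ j * x ^ j / ω ^ (j + 1) = 1 - (-x / ω) ^ s := by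
  calc (ω + x) * ∑ j ∈ Finset.range s, (-1) ^ j * x ^ j / ω ^ (j + 1)
      = (1 - -x / ω) * ∑ j ∈ Finset.range s, (-x / ω) ^ j := by
        rw [Finset.mul_sum, Finset.mul_sum]
        refine Finset.sum_congr rfl fun j _ => ?_
        rw [div_pow, neg_pow, pow_succ]
        field_simp
        ring
    _ = 1 - (-x / ω) ^ s := mul_neg_geom_sum _ _

theorem one_div_add_mul_rpow (hω : 0 < ω) {x : ℝ} (hx : 0 < x) (s : ℕ) :
    1 / ((ω + x) * x ^ ((s : ℝ) + ν))
      = ∑ j ∈ Finset.range s, (-1) ^ j / ω ^ (j + 1) * x ^ ((j : ℝ) - (s + ν))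
        + (-1) ^ s / ω ^ s * (x ^ (-ν) / (ω + x)) := by
  have hterm : ∀ j ∈ Finset.range s, (-1) ^ j / ω ^ (j + 1) * x ^ ((j : ℝ) - (s + ν))
      = (-1) ^ j * x ^ j / ω ^ (j + 1) / x ^ ((s : ℝ) + ν) := by
    intro j _
    rw [Real.rpow_sub hx, Real.rpow_natCast]
    ring
  have hneg : x ^ (-ν) = x ^ s / x ^ ((s : ℝ) + ν) := by
    rw [← Real.rpow_natCast, ← Real.rpow_sub hx, sub_add_cancel_left]
  have hωx : ω + x ≠ 0 := by positivity
  have hsum := (mul_comm _ _).trans (add_mul_sum_neg_pow_div_pow_succ hω.ne' x s)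
  rw [Finset.sum_congr rfl hterm, ← Finset.sum_div, hneg, eq_div_of_mul_eq hωx hsum,
    div_pow, neg_pow]
  field_simp
  ring

/-- The terms `f^(j)(0) / (j! (s+ν-j-1)) ε^(-(s+ν-j-1))` subtracted in the finite part, for
`f x = 1 / (ω + x)`. -/
noncomputable def finitePartCounterterm (ω ν : ℝ) (s : ℕ) (ε : ℝ) : ℝ :=
  ∑ j ∈ Finset.range s,
    (-1 : ℝ) ^ j / (ω ^ (j + 1) * ((s : ℝ) + ν - j - 1)) * ε ^ (-((s : ℝ) + ν - j - 1))

theorem integral_sub_finitePartCounterterm (hω : 0 < ω) (hν0 : 0 < ν) (s : ℕ) {ε a : ℝ}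
    (hε : 0 < ε) (ha : 0 < a) :
    (∫ x in ε..a, 1 / ((ω + x) * x ^ ((s : ℝ) + ν))) - finitePartCounterterm ω ν s ε
      = (-1) ^ s / ω ^ s * (∫ x in ε..a, x ^ (-ν) / (ω + x)) - finitePartCounterterm ω ν s a := by
  have hpos : uIcc ε a ⊆ Ioi 0 := fun x hx => lt_of_lt_of_le (lt_min hε ha) hx.1
  have hcont : ∀ r : ℝ, ContinuousOn (fun x : ℝ => x ^ r) (uIcc ε a) := fun r =>
    continuousOn_id.rpow_const fun x hx => Or.inl (hpos hx).ne'
  have hterm : ∀ j ∈ Finset.range s,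
      ∫ x in ε..a, (-1) ^ j / ω ^ (j + 1) * x ^ ((j : ℝ) - (s + ν))
        = (-1 : ℝ) ^ j / (ω ^ (j + 1) * ((s : ℝ) + ν - j - 1))
          * (ε ^ (-((s : ℝ) + ν - j - 1)) - a ^ (-((s : ℝ) + ν - j - 1))) := by
    intro j hj
    rw [intervalIntegral.integral_const_mul,
      show (j : ℝ) - (s + ν) = -((s : ℝ) + ν - j - 1) - 1 by ring,
      integral_rpow_neg_sub_one (natCast_add_sub_natCast_sub_one_pos hν0 hj).ne' hε ha]
    field_simp
  have hint : ∀ j ∈ Finset.range s, IntervalIntegrable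
      (fun x : ℝ => (-1) ^ j / ω ^ (j + 1) * x ^ ((j : ℝ) - (s + ν))) volume ε a :=
    fun j _ => ((hcont _).intervalIntegrable).const_mul _
  have hint_sum : IntervalIntegrable
      (fun x : ℝ => ∑ j ∈ Finset.range s, (-1) ^ j / ω ^ (j + 1) * x ^ ((j : ℝ) - (s + ν)))
      volume ε a := by
    simpa only [Finset.sum_fn] using IntervalIntegrable.sum _ hint
  rw [intervalIntegral.integral_congr fun x hx => one_div_add_mul_rpow hω (hpos hx) s,
    intervalIntegral.integral_add hint_sum
      (((continuousOn_rpow_neg_div_add hω.le).mono hpos).intervalIntegrable.const_mul _),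
    intervalIntegral.integral_finsetSum hint, intervalIntegral.integral_const_mul,
    Finset.sum_congr rfl hterm, finitePartCounterterm, finitePartCounterterm]
  simp only [mul_sub, Finset.sum_sub_distrib]
  ring

theorem tendsto_integral_sub_finitePartCounterterm (hω : 0 < ω) (hν0 : 0 < ν) (hν1 : ν < 1)
    (s : ℕ) {a : ℝ} (ha : 0 < a) :
    Tendsto (fun ε => (∫ x in ε..a, 1 / ((ω + x) * x ^ ((s : ℝ) + ν)))
        - finitePartCounterterm ω ν s ε) (𝓝[>] 0)
      (𝓝 ((-1) ^ s / ω ^ s * (∫ x in (0 : ℝ)..a, x ^ (-ν) / (ω + x))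
        - finitePartCounterterm ω ν s a)) := by
  have hintegrable : IntegrableOn (fun x : ℝ => x ^ (-ν) / (ω + x)) (uIcc 0 a) := by
    rw [uIcc_of_le ha.le, integrableOn_Icc_iff_integrableOn_Ioc]
    exact (integrableOn_Ioi_rpow_neg_div_add hω hν0 hν1).mono_set Ioc_subset_Ioi_self
  have hprimitive : Tendsto (fun ε => ∫ x in ε..a, x ^ (-ν) / (ω + x)) (𝓝[>] 0)
      (𝓝 (∫ x in (0 : ℝ)..a, x ^ (-ν) / (ω + x))) := by
    refine ((intervalIntegral.continuousOn_primitive_interval_left hintegrable) 0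
      left_mem_uIcc).tendsto.mono_left ?_
    rw [← nhdsWithin_Ioo_eq_nhdsGT ha, uIcc_of_le ha.le]
    exact nhdsWithin_mono 0 Ioo_subset_Icc_self
  refine ((hprimitive.const_mul _).sub_const _).congr' ?_
  filter_upwards [self_mem_nhdsWithin] with ε (hε : 0 < ε)
  exact (integral_sub_finitePartCounterterm hω hν0 s hε ha).symm

theorem tendsto_finitePartCounterterm_atTop (hν0 : 0 < ν) (s : ℕ) :
    Tendsto (finitePartCounterterm ω ν s) atTop (𝓝 0) := by
  rw [← Finset.sum_const_zero (s := Finset.range s)]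
  refine tendsto_finsetSum _ fun j hj => ?_
  simpa using (tendsto_rpow_neg_atTop (natCast_add_sub_natCast_sub_one_pos hν0 hj)).const_mul
    ((-1 : ℝ) ^ j / (ω ^ (j + 1) * ((s : ℝ) + ν - j - 1)))

end StieltjesKernel

theorem finite_part_stieltjes_kernel_general (ω : ℝ) (hω : 0 < ω) (s : ℕ)
    (ν : ℝ) (hν0 : 0 < ν) (hν1 : ν < 1) (F : ℝ → ℝ)
    (hF : ∀ a : ℝ, 0 < a → Tendsto (fun ε : ℝ =>
        (∫ x in ε..a, 1 / ((ω + x) * x ^ ((s : ℝ) + ν)))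
        - (∑ j ∈ Finset.range s,
            (-1 : ℝ) ^ j / (ω ^ (j + 1) * ((s : ℝ) + ν - j - 1)) *
              ε ^ (-((s : ℝ) + ν - j - 1))))
      (nhdsWithin 0 (Ioi 0)) (nhds (F a))) :
    Tendsto F atTop
      (nhds ((-1 : ℝ) ^ s * Real.pi /
        (ω ^ ((s : ℝ) + ν) * Real.sin (Real.pi * ν)))) := by
  have hF_eq : ∀ a, 0 < a → F a = (-1) ^ s / ω ^ s * (∫ x in (0 : ℝ)..a, x ^ (-ν) / (ω + x))
      - finitePartCounterterm ω ν s a := fun a ha =>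
    tendsto_nhds_unique (hF a ha) (tendsto_integral_sub_finitePartCounterterm hω hν0 hν1 s ha)
  have hintegral : Tendsto (fun a => ∫ x in (0 : ℝ)..a, x ^ (-ν) / (ω + x)) atTop
      (𝓝 (ω ^ (-ν) * (Real.pi / Real.sin (Real.pi * ν)))) :=
    integral_Ioi_rpow_neg_div_add hω hν0 hν1 ▸ intervalIntegral_tendsto_integral_Ioi 0
      (integrableOn_Ioi_rpow_neg_div_add hω hν0 hν1) tendsto_id
  have hvalue : (-1) ^ s / ω ^ s * (ω ^ (-ν) * (Real.pi / Real.sin (Real.pi * ν))) - 0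
      = (-1 : ℝ) ^ s * Real.pi / (ω ^ ((s : ℝ) + ν) * Real.sin (Real.pi * ν)) := by
    rw [sub_zero, Real.rpow_add hω, Real.rpow_natCast, Real.rpow_neg hω.le]
    field_simp
  rw [← hvalue]
  refine ((hintegral.const_mul _).sub
    (tendsto_finitePartCounterterm_atTop (ω := ω) hν0 s)).congr' ?_
  filter_upwards [eventually_gt_atTop 0] with a ha
  exact (hF_eq a ha).symm

/-- For `ω > 0`, an integer `s ≥ 1`, and `0 < ν < 1`, the finite part
integral of the divergent integral `∫_0^∞ 1/((ω+x) x^{s+ν}) dx` equals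
`(−1)^s π/(ω^{s+ν} sin(πν))`: the inner `ε → 0⁺` limit defines the finite part `F a` over
`[0,a]`, and `F a → (−1)^s π/(ω^{s+ν} sin πν)` as `a → ∞`. -/
theorem finite_part_stieltjes_kernel (ω : ℝ) (hω : 0 < ω) (s : ℕ) (hs : 1 ≤ s)
    (ν : ℝ) (hν0 : 0 < ν) (hν1 : ν < 1) (F : ℝ → ℝ)
    (hF : ∀ a : ℝ, 0 < a → Tendsto (fun ε : ℝ =>
        (∫ x in ε..a, 1 / ((ω + x) * x ^ ((s : ℝ) + ν)))
        - (∑ j ∈ Finset.range s,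
            (-1 : ℝ) ^ j / (ω ^ (j + 1) * ((s : ℝ) + ν - j - 1)) *
              ε ^ (-((s : ℝ) + ν - j - 1))))
      (nhdsWithin 0 (Ioi 0)) (nhds (F a))) :
    Tendsto F atTop
      (nhds ((-1 : ℝ) ^ s * Real.pi /
        (ω ^ ((s : ℝ) + ν) * Real.sin (Real.pi * ν)))) :=
  finite_part_stieltjes_kernel_general ω hω s ν hν0 hν1 F hF
end

section
/- For every ν with 0 < ν < 1 and every ω > 1, ∫_0^1 1/((1−x)^ν (ω−x)) dx = Σ_{s=0}^∞ (Γ(s+1) Γ(1−ν) / Γ(s−ν+2)) ω^{−(s+1)}, the series on the right converging for ω > 1. -/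
open MeasureTheory Set

/-! On `[0, 1]` the kernel `1 / (ω - x)` is the geometric series `∑ x ^ s / ω ^ (s + 1)`, whose
partial sums are dominated by `1 / (ω - x) ≤ 1 / (ω - 1)`. Dominated convergence therefore
integrates the series termwise against any integrable weight, here `(1 - x) ^ (-ν)`, and the
resulting moments `∫ x ^ s (1 - x) ^ (-ν)` are the Beta values `B(s + 1, 1 - ν)`. -/

theorem intervalIntegral_rpow_mul_one_sub_rpow {a b : ℝ} (ha : 0 < a) (hb : 0 < b) :
    ∫ x in (0:ℝ)..1, x ^ (a - 1) * (1 - x) ^ (b - 1)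
      = Real.Gamma a * Real.Gamma b / Real.Gamma (a + b) := by
  apply Complex.ofReal_injective
  rw [← intervalIntegral.integral_ofReal, Complex.ofReal_div, Complex.ofReal_mul,
    ← Complex.Gamma_ofReal, ← Complex.Gamma_ofReal, ← Complex.Gamma_ofReal,
    Complex.ofReal_add, ← Complex.betaIntegral_eq_Gamma_mul_div _ _ (by simpa) (by simpa)]
  refine intervalIntegral.integral_congr fun x hx => ?_
  rw [uIcc_of_le zero_le_one] at hx
  simp only [Complex.ofReal_mul, Complex.ofReal_cpow hx.1,
    Complex.ofReal_cpow (sub_nonneg.mpr hx.2)]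
  push_cast
  ring

theorem intervalIntegrable_sub_rpow {r : ℝ} (hr : -1 < r) (c a b : ℝ) :
    IntervalIntegrable (fun x : ℝ => (c - x) ^ r) volume a b := by
  simpa using
    (intervalIntegral.intervalIntegrable_rpow' (a := c - a) (b := c - b) hr).comp_sub_left c

theorem Gamma_mul_Gamma_div_Gamma_eq_intervalIntegral {ν : ℝ} (hν : ν < 1) (s : ℕ) :
    Real.Gamma ((s : ℝ) + 1) * Real.Gamma (1 - ν) / Real.Gamma ((s : ℝ) - ν + 2)
      = ∫ x in (0:ℝ)..1, x ^ s * (1 - x) ^ (-ν) := by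
  have h := intervalIntegral_rpow_mul_one_sub_rpow (a := s + 1) (b := 1 - ν) (by positivity)
    (by linarith)
  rw [add_sub_cancel_right, sub_sub_cancel_left, show (s : ℝ) + 1 + (1 - ν) = s - ν + 2 by ring]
    at h
  simp_rw [← h, Real.rpow_natCast]

theorem hasSum_pow_div_pow_succ {𝕜 : Type*} [NormedField 𝕜] {x ω : 𝕜}
    (hx : ‖x‖ < ‖ω‖) :
    HasSum (fun n : ℕ => x ^ n / ω ^ (n + 1)) (ω - x)⁻¹ := by
  have hω : ω ≠ 0 := norm_pos_iff.mp ((norm_nonneg x).trans_lt hx)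
  have hωx : ω - x ≠ 0 := sub_ne_zero.mpr fun h => hx.ne (congrArg norm h).symm
  have hr : ‖x / ω‖ < 1 := by rwa [norm_div, div_lt_one (norm_pos_iff.mpr hω)]
  have h := (hasSum_geometric_of_norm_lt_one hr).mul_left ω⁻¹
  have hterm (n : ℕ) : ω⁻¹ * (x / ω) ^ n = x ^ n / ω ^ (n + 1) := by
    rw [div_pow, pow_succ]
    field_simp
  rwa [funext hterm, show ω⁻¹ * (1 - x / ω)⁻¹ = (ω - x)⁻¹ by field_simp] at h

theorem hasSum_intervalIntegral_div_sub {w : ℝ → ℝ} (hw : IntervalIntegrable w volume 0 1)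
    {ω : ℝ} (hω : 1 < ω) :
    HasSum (fun s : ℕ => (∫ x in (0:ℝ)..1, x ^ s * w x) / ω ^ (s + 1))
      (∫ x in (0:ℝ)..1, w x / (ω - x)) := by
  have hω0 : 0 < ω := zero_lt_one.trans hω
  have hgeom {t : ℝ} (ht : t ∈ uIcc (0:ℝ) 1) :
      HasSum (fun n : ℕ => t ^ n / ω ^ (n + 1)) (ω - t)⁻¹ := by
    rw [uIcc_of_le zero_le_one] at ht
    refine hasSum_pow_div_pow_succ ?_
    rw [Real.norm_eq_abs, Real.norm_eq_abs, abs_of_nonneg ht.1, abs_of_pos hω0]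
    linarith [ht.2]
  simp_rw [← intervalIntegral.integral_div]
  refine intervalIntegral.hasSum_integral_of_dominated_convergence
    (fun n t => |w t| * (t ^ n / ω ^ (n + 1))) (fun n => ?_) (fun n => ?_) ?_ ?_ ?_
  · exact ((hw.continuousOn_mul (continuous_pow n).continuousOn).div_const _).def'.1
  · refine ae_of_all _ fun t ht => ?_
    rw [uIoc_of_le zero_le_one] at ht
    simp [abs_of_pos hω0, abs_of_pos ht.1, mul_div_assoc, mul_comm]
  · exact ae_of_all _ fun t ht => ((hgeom (uIoc_subset_uIcc ht)).mul_left _).summable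
  · simp_rw [tsum_mul_left]
    refine hw.abs.mul_continuousOn (ContinuousOn.congr (f := fun t => (ω - t)⁻¹) ?_
      fun t ht => (hgeom ht).tsum_eq)
    refine (continuous_const.sub continuous_id).continuousOn.inv₀ fun t ht => ?_
    rw [uIcc_of_le zero_le_one] at ht
    exact (sub_pos.mpr (ht.2.trans_lt hω)).ne'
  · refine ae_of_all _ fun t ht => ?_
    have hterm (n : ℕ) : t ^ n * w t / ω ^ (n + 1) = w t * (t ^ n / ω ^ (n + 1)) := by ring
    rw [funext hterm, div_eq_mul_inv]
    exact (hgeom (uIoc_subset_uIcc ht)).mul_left (w t)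

theorem branch_point_contribution_expansion_general (ν : ℝ) (hν1 : ν < 1)
    (ω : ℝ) (hω : 1 < ω) :
    Summable (fun s : ℕ =>
      Real.Gamma ((s : ℝ) + 1) * Real.Gamma (1 - ν) / Real.Gamma ((s : ℝ) - ν + 2) /
        ω ^ (s + 1)) ∧
    (∫ x in (0:ℝ)..1, 1 / ((1 - x) ^ ν * (ω - x)))
      = ∑' s : ℕ,
          Real.Gamma ((s : ℝ) + 1) * Real.Gamma (1 - ν) / Real.Gamma ((s : ℝ) - ν + 2) /
            ω ^ (s + 1) := by
  have hsum := hasSum_intervalIntegral_div_sub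
    (intervalIntegrable_sub_rpow (neg_lt_neg hν1) 1 0 1) hω
  have hintegrand : ∫ x in (0:ℝ)..1, 1 / ((1 - x) ^ ν * (ω - x))
      = ∫ x in (0:ℝ)..1, (1 - x) ^ (-ν) / (ω - x) := by
    refine intervalIntegral.integral_congr fun x hx => ?_
    rw [uIcc_of_le zero_le_one] at hx
    rw [Real.rpow_neg (sub_nonneg.mpr hx.2), one_div, mul_inv, div_eq_mul_inv]
  simp_rw [Gamma_mul_Gamma_div_Gamma_eq_intervalIntegral hν1, hintegrand]
  exact ⟨hsum.summable, hsum.tsum_eq.symm⟩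

/-- For every `0 < ν < 1` and `ω > 1`,
`∫_0^1 1/((1−x)^ν (ω−x)) dx = Σ_{s=0}^∞ (Γ(s+1)Γ(1−ν)/Γ(s−ν+2)) ω^{−(s+1)}`, the series
converging for `ω > 1`. -/
theorem branch_point_contribution_expansion (ν : ℝ) (hν0 : 0 < ν) (hν1 : ν < 1)
    (ω : ℝ) (hω : 1 < ω) :
    Summable (fun s : ℕ =>
      Real.Gamma ((s : ℝ) + 1) * Real.Gamma (1 - ν) / Real.Gamma ((s : ℝ) - ν + 2) /
        ω ^ (s + 1)) ∧
    (∫ x in (0:ℝ)..1, 1 / ((1 - x) ^ ν * (ω - x)))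
      = ∑' s : ℕ,
          Real.Gamma ((s : ℝ) + 1) * Real.Gamma (1 - ν) / Real.Gamma ((s : ℝ) - ν + 2) /
            ω ^ (s + 1) :=
  branch_point_contribution_expansion_general ν hν1 ω hω
end

section
/- For every ν with 0 < ν < 1 and every ω > 1, ∫_0^∞ 1/((1+x)^ν (ω+x)) dx = −Σ_{s=0}^∞ (Γ(s+1) Γ(1−ν) / Γ(s−ν+2)) ω^{−(s+1)} + (π / sin(πν)) Σ_{s=0}^∞ (Γ(ν+s) / (Γ(ν) s!)) ω^{−(s+ν)}, both series on the right converging for ω > 1. -/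
/-!
Substituting `u = 1 + x` turns the integral into `∫_1^∞ u^{-ν} / (u + ω - 1) du`, the Mellin
integral over `(0, ∞)`, which equals `(π / sin πν) (ω - 1)^{-ν}` (a Beta integral after
`u = (ω - 1) t / (1 - t)`), minus its piece over `(0, 1)`. After `u ↦ 1 - u` that piece is
`∫_0^1 (1 - t)^{-ν} / (ω - t) dt`; expanding `1 / (ω - t)` as a geometric series gives the Beta
integrals `B(s + 1, 1 - ν) / ω^{s+1}`, the first series. The binomial series of
`(1 - 1/ω)^{-ν}` writes `(ω - 1)^{-ν}` as the second series.
-/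

open MeasureTheory Set
open scoped Interval

theorem Real.Gamma_add_nat_eq_mul_ascPochhammer (n : ℕ) {x : ℝ} (hx : ∀ m : ℕ, x ≠ -m) :
    Real.Gamma (x + n) = Real.Gamma x * (ascPochhammer ℝ n).eval x := by
  induction n with
  | zero => simp
  | succ n ih =>
    have hxn : x + n ≠ 0 := fun h => hx n (eq_neg_of_add_eq_zero_left h)
    rw [Nat.cast_succ, ← add_assoc, Real.Gamma_add_one hxn, ih,
      ascPochhammer_succ_eval]
    ring

theorem Ring.choose_add_natCast_sub_one_eq_Gamma_div (n : ℕ) {x : ℝ} (hx : ∀ m : ℕ, x ≠ -m) :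
    Ring.choose (x + n - 1) n = Real.Gamma (x + n) / (Real.Gamma x * n.factorial) := by
  have hfact : n.factorial • Ring.multichoose x n = (ascPochhammer ℝ n).eval x := by
    rw [Ring.factorial_nsmul_multichoose_eq_ascPochhammer,
      Polynomial.ascPochhammer_smeval_eq_eval]
  rw [← Ring.multichoose_eq, Real.Gamma_add_nat_eq_mul_ascPochhammer n hx, ← hfact,
    nsmul_eq_mul]
  field_simp [Real.Gamma_ne_zero hx, n.factorial_ne_zero]

theorem Real.hasSum_Gamma_div_mul_pow {x : ℝ} (hx : ∀ m : ℕ, x ≠ -m) {y : ℝ} (hy : |y| < 1) :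
    HasSum (fun s : ℕ => Real.Gamma (x + s) / (Real.Gamma x * s.factorial) * y ^ s)
      ((1 - y) ^ (-x)) := by
  have hmem : y ∈ Metric.eball (0 : ℝ) 1 := by
    simpa [edist_dist, Real.dist_eq] using hy
  have h := (Real.one_div_one_sub_rpow_hasFPowerSeriesOnBall_zero x).hasSum hmem
  simp only [FormalMultilinearSeries.ofScalars_apply_eq, smul_eq_mul, zero_add,
    Ring.choose_add_natCast_sub_one_eq_Gamma_div _ hx] at h
  rwa [Real.rpow_neg (by linarith [(abs_lt.mp hy).2]), ← one_div]

theorem intervalIntegral.integral_rpow_mul_one_sub_rpow {p q : ℝ} (hp : 0 < p) (hq : 0 < q) :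
    ∫ t in (0:ℝ)..1, t ^ (p - 1) * (1 - t) ^ (q - 1)
      = Real.Gamma p * Real.Gamma q / Real.Gamma (p + q) := by
  apply Complex.ofReal_injective
  rw [← intervalIntegral.integral_ofReal]
  push_cast
  rw [← Complex.Gamma_ofReal, ← Complex.Gamma_ofReal, ← Complex.Gamma_ofReal, Complex.ofReal_add,
    ← Complex.betaIntegral_eq_Gamma_mul_div _ _ (by simpa) (by simpa), Complex.betaIntegral]
  refine intervalIntegral.integral_congr fun t ht => ?_
  rw [uIcc_of_le zero_le_one] at ht
  rw [Complex.ofReal_cpow ht.1, Complex.ofReal_cpow (sub_nonneg.mpr ht.2)]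
  push_cast
  ring

theorem hasSum_pow_div_pow_succ_s19 {t ω : ℝ} (ht : |t| < ω) :
    HasSum (fun s : ℕ => t ^ s / ω ^ (s + 1)) (1 / (ω - t)) := by
  have hω : 0 < ω := (abs_nonneg t).trans_lt ht
  have hr : |t / ω| < 1 := by rwa [abs_div, abs_of_pos hω, div_lt_one hω]
  have hterm : (fun s : ℕ => t ^ s / ω ^ (s + 1)) = fun s => ω⁻¹ * (t / ω) ^ s := by
    ext s
    rw [div_pow, pow_succ]
    field_simp
  have hsum : 1 / (ω - t) = ω⁻¹ * (1 - t / ω)⁻¹ := by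
    have : ω - t ≠ 0 := by linarith [le_abs_self t]
    field_simp
  rw [hterm, hsum]
  exact (hasSum_geometric_of_abs_lt_one hr).mul_left ω⁻¹

theorem intervalIntegral.hasSum_integral_pow_mul_div_pow {w : ℝ → ℝ}
    (hw : IntervalIntegrable w volume 0 1) {ω : ℝ} (hω : 1 < ω) :
    HasSum (fun s : ℕ => (∫ t in (0:ℝ)..1, t ^ s * w t) / ω ^ (s + 1))
      (∫ t in (0:ℝ)..1, w t / (ω - t)) := by
  have hI : ∀ t ∈ Ι (0:ℝ) 1, |t| ≤ 1 := fun t ht => by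
    rw [uIoc_of_le zero_le_one] at ht
    rw [abs_of_pos ht.1]
    exact ht.2
  have hω0 : 0 < ω := by linarith
  simp only [← intervalIntegral.integral_div]
  refine intervalIntegral.hasSum_integral_of_dominated_convergence
    (fun s t => ‖w t‖ * (ω⁻¹) ^ (s + 1)) (fun s => ?_) (fun s => ?_) ?_ ?_ ?_
  · have := hw.def'.aestronglyMeasurable
    fun_prop
  · refine ae_of_all _ fun t ht => ?_
    calc ‖t ^ s * w t / ω ^ (s + 1)‖ = |t| ^ s * ‖w t‖ * (ω⁻¹) ^ (s + 1) := by
          rw [norm_div, norm_mul, norm_pow, Real.norm_eq_abs t,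
            Real.norm_of_nonneg (by positivity : (0:ℝ) ≤ ω ^ (s + 1)), inv_pow, div_eq_mul_inv]
      _ ≤ ‖w t‖ * (ω⁻¹) ^ (s + 1) := by
          gcongr
          exact mul_le_of_le_one_left (norm_nonneg _) (pow_le_one₀ (abs_nonneg t) (hI t ht))
  · exact ae_of_all _ fun t _ => ((summable_geometric_of_lt_one (by positivity)
      (inv_lt_one_of_one_lt₀ hω)).comp_injective (add_left_injective 1)).mul_left ‖w t‖
  · simp only [tsum_mul_left]
    exact hw.norm.mul_const _
  · refine ae_of_all _ fun t ht => ?_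
    simpa [mul_div_assoc', div_eq_mul_one_div (w t), mul_comm] using
      (hasSum_pow_div_pow_succ_s19 ((hI t ht).trans_lt hω)).mul_left (w t)

theorem integral_Ioi_rpow_div_add {σ a : ℝ} (hσ0 : 0 < σ) (hσ1 : σ < 1) (ha : 0 < a) :
    ∫ u in Ioi (0:ℝ), u ^ (σ - 1) / (u + a)
      = Real.pi / Real.sin (Real.pi * σ) * a ^ (σ - 1) := by
  set f : ℝ → ℝ := fun t => a * t / (1 - t)
  have himage : f '' Ioo 0 1 = Ioi 0 := by
    refine Subset.antisymm ?_ fun u (hu : 0 < u) => ⟨u / (u + a), ⟨by positivity, ?_⟩, ?_⟩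
    · rintro _ ⟨t, ht, rfl⟩
      exact div_pos (mul_pos ha ht.1) (sub_pos.mpr ht.2)
    · rw [div_lt_one (by positivity)]
      linarith
    · have : u + a ≠ 0 := by positivity
      simp only [f]
      field_simp [ha.ne']
      ring
  have hderiv : ∀ t ∈ Ioo (0:ℝ) 1, HasDerivWithinAt f (a / (1 - t) ^ 2) (Ioo 0 1) t := by
    intro t ht
    have h1 : 1 - t ≠ 0 := (sub_pos.mpr ht.2).ne'
    refine (((hasDerivAt_id t).const_mul a).div ((hasDerivAt_id t).const_sub 1) h1)
      |>.hasDerivWithinAt.congr_deriv ?_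
    simp only [id]
    field_simp
    ring
  have hinj : InjOn f (Ioo 0 1) := by
    intro t₁ ht₁ t₂ ht₂ h
    have h1 : 1 - t₁ ≠ 0 := (sub_pos.mpr ht₁.2).ne'
    have h2 : 1 - t₂ ≠ 0 := (sub_pos.mpr ht₂.2).ne'
    simp only [f] at h
    field_simp at h
    nlinarith
  have hsubst : ∀ t ∈ Ioo (0:ℝ) 1, |a / (1 - t) ^ 2| • (f t ^ (σ - 1) / (f t + a))
      = a ^ (σ - 1) * (t ^ (σ - 1) * (1 - t) ^ ((1 - σ) - 1)) := by
    intro t ⟨ht0, ht1⟩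
    have h1 : 0 < 1 - t := sub_pos.mpr ht1
    have hcancel : (1 - t) ^ ((1 - σ) - 1) * (1 - t) ^ (σ - 1) * (1 - t) = 1 := by
      rw [← Real.rpow_add h1, ← Real.rpow_add_one h1.ne',
        show (1 - σ - 1) + (σ - 1) + 1 = (0:ℝ) by ring, Real.rpow_zero]
    simp only [f, smul_eq_mul]
    rw [abs_of_pos (by positivity), Real.div_rpow (by positivity) h1.le,
      Real.mul_rpow ha.le ht0.le]
    field_simp
    linear_combination -hcancel
  rw [← himage, integral_image_eq_integral_abs_deriv_smul measurableSet_Ioo hderiv hinj,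
    setIntegral_congr_fun measurableSet_Ioo hsubst, integral_const_mul,
    ← integral_Ioc_eq_integral_Ioo, ← intervalIntegral.integral_of_le zero_le_one,
    intervalIntegral.integral_rpow_mul_one_sub_rpow hσ0 (by linarith), add_sub_cancel,
    Real.Gamma_one, div_one, Real.Gamma_mul_Gamma_one_sub, mul_comm]

theorem integral_Ioi_comp_const_add {E : Type*} [NormedAddCommGroup E] [NormedSpace ℝ E]
    (f : ℝ → E) (c : ℝ) : ∫ x in Ioi 0, f (c + x) = ∫ u in Ioi c, f u := by
  have := (measurePreserving_add_left volume c).setIntegral_preimage_emb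
    (measurableEmbedding_addLeft c) f (Ioi c)
  rwa [preimage_const_add_Ioi, sub_self] at this

theorem Real.hasSum_Gamma_div_mul_rpow_neg {ν ω : ℝ} (hν : ∀ m : ℕ, ν ≠ -m) (hω : 1 < ω) :
    HasSum (fun s : ℕ => Real.Gamma (ν + s) / (Real.Gamma ν * s.factorial) * ω ^ (-((s : ℝ) + ν)))
      ((ω - 1) ^ (-ν)) := by
  have hω0 : 0 < ω := by linarith
  have hinv : |ω⁻¹| < 1 := by rw [abs_inv, abs_of_pos hω0]; exact inv_lt_one_of_one_lt₀ hω
  have hterm : ∀ s : ℕ, ω ^ (-((s : ℝ) + ν)) = ω ^ (-ν) * ω⁻¹ ^ s := fun s => by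
    rw [neg_add, Real.rpow_add hω0, Real.rpow_neg hω0.le, Real.rpow_natCast, inv_pow, mul_comm]
  have hsum : (ω - 1) ^ (-ν) = ω ^ (-ν) * (1 - ω⁻¹) ^ (-ν) := by
    rw [← Real.mul_rpow hω0.le (sub_nonneg.mpr (inv_le_one_of_one_le₀ hω.le)), mul_one_sub,
      mul_inv_cancel₀ hω0.ne']
  simp only [hterm, hsum, mul_left_comm _ (ω ^ (-ν))]
  exact (Real.hasSum_Gamma_div_mul_pow hν hinv).mul_left (ω ^ (-ν))

theorem hasSum_Gamma_mul_Gamma_div_Gamma_div_pow {ν ω : ℝ} (hν : ν < 1) (hω : 1 < ω) :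
    HasSum (fun s : ℕ => Real.Gamma ((s : ℝ) + 1) * Real.Gamma (1 - ν) /
        Real.Gamma ((s : ℝ) - ν + 2) / ω ^ (s + 1))
      (∫ t in (0:ℝ)..1, (1 - t) ^ (-ν) / (ω - t)) := by
  have hw : IntervalIntegrable (fun t : ℝ => (1 - t) ^ (-ν)) volume 0 1 := by
    simpa using (intervalIntegral.intervalIntegrable_rpow' (a := 1) (b := 0)
      (by linarith : -1 < -ν)).comp_sub_left 1
  have hmoment : ∀ s : ℕ, ∫ t in (0:ℝ)..1, t ^ s * (1 - t) ^ (-ν)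
      = Real.Gamma ((s : ℝ) + 1) * Real.Gamma (1 - ν) / Real.Gamma ((s : ℝ) - ν + 2) := by
    intro s
    have h := intervalIntegral.integral_rpow_mul_one_sub_rpow (p := s + 1) (q := 1 - ν)
      (by positivity) (by linarith)
    rw [add_sub_cancel_right, sub_sub_cancel_left, show (s : ℝ) + 1 + (1 - ν) = s - ν + 2 by ring]
      at h
    simpa only [Real.rpow_natCast] using h
  simpa only [hmoment] using intervalIntegral.hasSum_integral_pow_mul_div_pow hw hω

theorem integral_Ioi_one_div_rpow_mul_add {ν ω : ℝ} (hν0 : 0 < ν) (hν1 : ν < 1) (hω : 1 < ω) :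
    ∫ x in Ioi (0:ℝ), 1 / ((1 + x) ^ ν * (ω + x))
      = Real.pi / Real.sin (Real.pi * ν) * (ω - 1) ^ (-ν)
        - ∫ t in (0:ℝ)..1, (1 - t) ^ (-ν) / (ω - t) := by
  set g : ℝ → ℝ := fun u => u ^ (-ν) / (u + (ω - 1))
  have hmellin : ∫ u in Ioi 0, g u = Real.pi / Real.sin (Real.pi * ν) * (ω - 1) ^ (-ν) := by
    have h := integral_Ioi_rpow_div_add (σ := 1 - ν) (by linarith) (by linarith)
      (sub_pos.mpr hω)
    rwa [sub_sub_cancel_left, mul_one_sub, Real.sin_pi_sub] at h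
  have hg : IntegrableOn g (Ioi 0) := by
    refine Integrable.of_integral_ne_zero (hmellin ▸ (mul_pos (div_pos Real.pi_pos ?_)
      (Real.rpow_pos_of_pos (sub_pos.mpr hω) _)).ne')
    exact Real.sin_pos_of_pos_of_lt_pi (by positivity) (by nlinarith [Real.pi_pos])
  have hshift : ∫ x in Ioi 0, 1 / ((1 + x) ^ ν * (ω + x)) = ∫ u in Ioi 1, g u := by
    rw [← integral_Ioi_comp_const_add g 1]
    refine setIntegral_congr_fun measurableSet_Ioi fun x (hx : 0 < x) => ?_
    simp only [g]
    rw [Real.rpow_neg (by positivity), show 1 + x + (ω - 1) = ω + x by ring]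
    field_simp
  have hreflect : ∫ t in (0:ℝ)..1, g t = ∫ t in (0:ℝ)..1, (1 - t) ^ (-ν) / (ω - t) := by
    have h := intervalIntegral.integral_comp_sub_left g 1 (a := 0) (b := 1)
    rw [sub_self, sub_zero] at h
    rw [← h]
    congr! 2 with t
    ring
  rw [hshift, ← hmellin, ← hreflect, ← intervalIntegral.integral_Ioi_sub_Ioi hg zero_le_one,
    sub_sub_cancel]

/-- For every `0 < ν < 1` and `ω > 1`,
`∫_0^∞ 1/((1+x)^ν (ω+x)) dx = −Σ_{s=0}^∞ (Γ(s+1)Γ(1−ν)/Γ(s−ν+2)) ω^{−(s+1)}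
+ (π/sin(πν)) Σ_{s=0}^∞ (Γ(ν+s)/(Γ(ν) s!)) ω^{−(s+ν)}`, both series converging
for `ω > 1`. -/
theorem stieltjes_transform_exact_expansion (ν : ℝ) (hν0 : 0 < ν) (hν1 : ν < 1)
    (ω : ℝ) (hω : 1 < ω) :
    Summable (fun s : ℕ =>
      Real.Gamma ((s : ℝ) + 1) * Real.Gamma (1 - ν) / Real.Gamma ((s : ℝ) - ν + 2) /
        ω ^ (s + 1)) ∧
    Summable (fun s : ℕ =>
      Real.Gamma (ν + s) / (Real.Gamma ν * (s.factorial : ℝ)) * ω ^ (-((s : ℝ) + ν))) ∧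
    (∫ x in Ioi (0:ℝ), 1 / ((1 + x) ^ ν * (ω + x)))
      = -(∑' s : ℕ,
            Real.Gamma ((s : ℝ) + 1) * Real.Gamma (1 - ν) / Real.Gamma ((s : ℝ) - ν + 2) /
              ω ^ (s + 1))
        + Real.pi / Real.sin (Real.pi * ν) *
            ∑' s : ℕ,
              Real.Gamma (ν + s) / (Real.Gamma ν * (s.factorial : ℝ)) *
                ω ^ (-((s : ℝ) + ν)) := by
  have hB := hasSum_Gamma_mul_Gamma_div_Gamma_div_pow hν1 hω
  have hC := Real.hasSum_Gamma_div_mul_rpow_neg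
    (fun m => ((neg_nonpos.mpr m.cast_nonneg).trans_lt hν0).ne') hω
  refine ⟨hB.summable, hC.summable, ?_⟩
  rw [integral_Ioi_one_div_rpow_mul_add hν0 hν1 hω, hB.tsum_eq, hC.tsum_eq]
  ring
end
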